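/- arXiv:2108.00676 — 12 statements merged into one kernel-verified Lean document; each statement's English description precedes it below -/
import Mathlib

section
/- Let n ≥ 2. Then the set B has cardinality |B| = a_1·a_2···a_n + Σ_{j=1}^{n} d_j·∏_{1 ≤ i ≤ n, i ≠ j} a_i. -/
open Finset

/-- The set `B` of lattice points `v ∈ ℤ^n` with `-dᵢ < vᵢ ≤ aᵢ` for all `i`, and
for all `i < j`, `dⱼ(vᵢ - aᵢ) ≤ dᵢ vⱼ` and `dᵢ vⱼ < dⱼ vᵢ + dᵢ aⱼ`. -/
def setB (n : ℕ) (a d : Fin n → ℤ) : Set (Fin n → ℤ) :=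
  {v | (∀ i, -d i < v i ∧ v i ≤ a i) ∧
    ∀ i j : Fin n, i < j →
      d j * (v i - a i) ≤ d i * v j ∧ d i * v j < d j * v i + d i * a j}

/-!
Put `lo i = (vᵢ - aᵢ)/dᵢ` and `hi i = vᵢ/dᵢ`, so that `vᵢ` determines a rational interval
`[lo i, hi i]` of length `aᵢ/dᵢ`. Membership in `B` says that every such interval meets `(-1, 0]`
and that any two of them meet, touching endpoints being resolved by the index order. By
one-dimensional Helly, `B` splits according to the largest left endpoint `M = max lo i`. If
`M ≤ -1`, `v` ranges over the box `∏ (-dᵢ, aᵢ - dᵢ]`, with `∏ aᵢ` points. Otherwise let `j` be the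
last index with `lo j = M`; then `vⱼ` takes `dⱼ` values, and once it is fixed each other `vᵢ` is
an arbitrary integer in a half-open window of length `aᵢ`, giving `dⱼ ∏_{i ≠ j} aᵢ` points.
-/

section

variable {α : Type*} [Ring α] [LinearOrder α] [IsStrictOrderedRing α] [FloorRing α]

theorem Int.mem_Ioc_floor_add_iff {x : α} {m z : ℤ} :
    z ∈ Ioc ⌊x⌋ (⌊x⌋ + m) ↔ x < z ∧ (z : α) ≤ x + m := by
  rw [mem_Ioc, Int.floor_lt, ← sub_le_iff_le_add, Int.le_floor, Int.cast_sub, sub_le_iff_le_add]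

theorem Int.mem_Ico_ceil_add_iff {x : α} {m z : ℤ} :
    z ∈ Ico ⌈x⌉ (⌈x⌉ + m) ↔ x ≤ z ∧ (z : α) < x + m := by
  rw [mem_Ico, Int.ceil_le, ← sub_lt_iff_lt_add, Int.lt_ceil, Int.cast_sub, sub_lt_iff_lt_add]

end

theorem Finite.exists_last_argmax {ι α : Type*} [LinearOrder ι] [Finite ι] [Nonempty ι]
    [LinearOrder α] (f : ι → α) : ∃ j, ∀ i, f i ≤ f j ∧ (j < i → f i < f j) := by
  obtain ⟨j, hj⟩ := Finite.exists_max fun i => toLex (f i, i)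
  refine ⟨j, fun i => ?_⟩
  rcases Prod.Lex.toLex_le_toLex.mp (hj i) with h | ⟨h, h'⟩
  · exact ⟨h.le, fun _ => h⟩
  · exact ⟨h.le, fun hji => absurd h' (not_le.mpr hji)⟩

namespace SetB

variable {n : ℕ} (a d : Fin n → ℤ)

def lo (v : Fin n → ℤ) (i : Fin n) : ℚ := (v i - a i) / d i

def hi (v : Fin n → ℤ) (i : Fin n) : ℚ := v i / d i

variable {a d} {v : Fin n → ℤ} {i j k : Fin n}

lemma lo_lt_hi (ha : 0 < a i) (hd : 0 < d i) : lo a d v i < hi d v i := by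
  have ha' : (0 : ℚ) < a i := by exact_mod_cast ha
  exact div_lt_div_of_pos_right (by linarith) (by exact_mod_cast hd)

lemma neg_one_lt_hi_iff (hd : 0 < d i) : -1 < hi d v i ↔ -d i < v i := by
  rw [hi, lt_div_iff₀ (by exact_mod_cast hd), neg_one_mul]
  norm_cast

lemma neg_one_lt_lo_iff (hd : 0 < d i) : -1 < lo a d v i ↔ a i - d i < v i := by
  rw [lo, lt_div_iff₀ (by exact_mod_cast hd), neg_one_mul]
  norm_cast
  omega

lemma lo_le_neg_one_iff (hd : 0 < d i) : lo a d v i ≤ -1 ↔ v i ≤ a i - d i := by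
  rw [lo, div_le_iff₀ (by exact_mod_cast hd), neg_one_mul]
  norm_cast
  omega

lemma lo_nonpos_iff (hd : 0 < d i) : lo a d v i ≤ 0 ↔ v i ≤ a i := by
  rw [lo, div_nonpos_iff]
  norm_cast
  omega

lemma lo_le_hi_iff (hdi : 0 < d i) (hdj : 0 < d j) :
    lo a d v i ≤ hi d v j ↔ d j * (v i - a i) ≤ d i * v j := by
  rw [lo, hi, div_le_div_iff₀ (by exact_mod_cast hdi) (by exact_mod_cast hdj)]
  norm_cast
  rw [mul_comm, mul_comm (v j)]

lemma lo_lt_hi_iff (hdi : 0 < d i) (hdj : 0 < d j) :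
    lo a d v j < hi d v i ↔ d i * v j < d j * v i + d i * a j := by
  rw [lo, hi, div_lt_div_iff₀ (by exact_mod_cast hdj) (by exact_mod_cast hdi)]
  norm_cast
  constructor <;> intro h <;> linarith

lemma mem_setB_iff (hd : ∀ i, 0 < d i) : v ∈ setB n a d ↔
    (∀ i, -1 < hi d v i ∧ lo a d v i ≤ 0) ∧
      ∀ i j, i < j → lo a d v i ≤ hi d v j ∧ lo a d v j < hi d v i := by
  simp only [setB, Set.mem_ofPred_eq, neg_one_lt_hi_iff (hd _), lo_nonpos_iff (hd _),
    lo_le_hi_iff (hd _) (hd _), lo_lt_hi_iff (hd _) (hd _)]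

variable (a d)

def IsLow (v : Fin n → ℤ) : Prop := ∀ i, -1 < hi d v i ∧ lo a d v i ≤ -1

def IsPivot (j : Fin n) (v : Fin n → ℤ) : Prop :=
  ∀ i, (i < j → lo a d v i ≤ lo a d v j ∧ lo a d v j < hi d v i) ∧
    (j < i → lo a d v i < lo a d v j ∧ lo a d v j ≤ hi d v i)

variable {a d}

lemma IsPivot.lo_le_and_le_hi (ha : 0 < a j) (hd : 0 < d j) (hp : IsPivot a d j v)
    (i : Fin n) : lo a d v i ≤ lo a d v j ∧ lo a d v j ≤ hi d v i := by
  rcases lt_trichotomy i j with h | rfl | h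
  · exact ⟨((hp i).1 h).1, ((hp i).1 h).2.le⟩
  · exact ⟨le_rfl, (lo_lt_hi ha hd).le⟩
  · exact ⟨((hp i).2 h).1.le, ((hp i).2 h).2⟩

lemma IsPivot.unique (hj : IsPivot a d j v) (hk : IsPivot a d k v) : j = k := by
  by_contra hne
  rcases lt_or_gt_of_ne hne with h | h
  · linarith [((hj k).2 h).1, ((hk j).1 h).1]
  · linarith [((hj k).1 h).1, ((hk j).2 h).1]

lemma mem_setB_of_isLow (hd : ∀ i, 0 < d i) (hv : IsLow a d v) : v ∈ setB n a d := by
  refine (mem_setB_iff hd).mpr ⟨fun i => ⟨(hv i).1, by linarith [(hv i).2]⟩, fun i j _ => ?_⟩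
  constructor <;> linarith [hv i, hv j]

lemma mem_setB_of_isPivot (ha : ∀ i, 0 < a i) (hd : ∀ i, 0 < d i)
    (hj : lo a d v j ∈ Set.Ioc (-1) 0) (hp : IsPivot a d j v) : v ∈ setB n a d := by
  have hstab := hp.lo_le_and_le_hi (ha j) (hd j)
  refine (mem_setB_iff hd).mpr ⟨fun i => ?_, fun p q hpq => ⟨?_, ?_⟩⟩
  · constructor <;> linarith [hstab i, hj.1, hj.2]
  · linarith [hstab p, hstab q]
  · rcases lt_or_ge j q with hjq | hqj
    · linarith [((hp q).2 hjq).1, hstab p]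
    · linarith [hstab q, ((hp p).1 (hpq.trans_le hqj)).2]

lemma isLow_or_isPivot_of_mem_setB (hd : ∀ i, 0 < d i) (hv : v ∈ setB n a d) :
    IsLow a d v ∨ ∃ j, lo a d v j ∈ Set.Ioc (-1) 0 ∧ IsPivot a d j v := by
  obtain ⟨hrange, hpair⟩ := (mem_setB_iff hd).mp hv
  by_cases hlow : ∀ i, lo a d v i ≤ -1
  · exact .inl fun i => ⟨(hrange i).1, hlow i⟩
  push Not at hlow
  obtain ⟨i₀, hi₀⟩ := hlow
  have : Nonempty (Fin n) := ⟨i₀⟩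
  obtain ⟨j, hj⟩ := Finite.exists_last_argmax (lo a d v)
  refine .inr ⟨j, ⟨hi₀.trans_le (hj i₀).1, (hrange j).2⟩, fun i => ⟨fun hij => ?_, fun hji => ?_⟩⟩
  · exact ⟨(hj i).1, (hpair i j hij).2⟩
  · exact ⟨(hj i).2 hji, (hpair j i hji).1⟩

variable (a d)

noncomputable def window (j i : Fin n) (t : ℚ) : Finset ℤ :=
  if i < j then Ioc ⌊t * d i⌋ (⌊t * d i⌋ + a i) else Ico ⌈t * d i⌉ (⌈t * d i⌉ + a i)

noncomputable def pivotSlice (j : Fin n) (w : ℤ) : Finset (Fin n → ℤ) :=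
  Fintype.piFinset fun i => if i = j then {w} else window a d j i ((w - a j) / d j)

noncomputable def pivotRegion (j : Fin n) : Finset (Fin n → ℤ) :=
  (Ioc (a j - d j) (a j)).biUnion (pivotSlice a d j)

noncomputable def lowBox : Finset (Fin n → ℤ) :=
  Fintype.piFinset fun i => Ioc (-d i) (a i - d i)

variable {a d}

lemma mem_window_of_lt (hd : 0 < d i) (hij : i < j) {t : ℚ} :
    v i ∈ window a d j i t ↔ lo a d v i ≤ t ∧ t < hi d v i := by
  have hd' : (0 : ℚ) < d i := by exact_mod_cast hd
  rw [window, if_pos hij, Int.mem_Ioc_floor_add_iff, lo, hi, div_le_iff₀ hd', lt_div_iff₀ hd']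
  constructor <;> rintro ⟨h₁, h₂⟩ <;> constructor <;> linarith

lemma mem_window_of_gt (hd : 0 < d i) (hji : j < i) {t : ℚ} :
    v i ∈ window a d j i t ↔ lo a d v i < t ∧ t ≤ hi d v i := by
  have hd' : (0 : ℚ) < d i := by exact_mod_cast hd
  rw [window, if_neg hji.not_gt, Int.mem_Ico_ceil_add_iff, lo, hi, div_lt_iff₀ hd',
    le_div_iff₀ hd']
  constructor <;> rintro ⟨h₁, h₂⟩ <;> constructor <;> linarith

lemma card_window (ha : 0 ≤ a i) (t : ℚ) : (#(window a d j i t) : ℤ) = a i := by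
  unfold window
  split_ifs <;> simp [ha]

lemma mem_pivotSlice_iff (hd : ∀ i, 0 < d i) {w : ℤ} :
    v ∈ pivotSlice a d j w ↔ v j = w ∧ IsPivot a d j v := by
  rw [pivotSlice, Fintype.mem_piFinset]
  constructor
  · intro h
    obtain rfl : v j = w := by simpa using h j
    refine ⟨rfl, fun i => ⟨fun hij => ?_, fun hji => ?_⟩⟩
    · have hvi := h i
      rw [if_neg hij.ne] at hvi
      exact (mem_window_of_lt (hd i) hij).mp hvi
    · have hvi := h i
      rw [if_neg hji.ne'] at hvi
      exact (mem_window_of_gt (hd i) hji).mp hvi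
  · rintro ⟨rfl, hp⟩ i
    rcases lt_trichotomy i j with hij | rfl | hji
    · rw [if_neg hij.ne]
      exact (mem_window_of_lt (hd i) hij).mpr ((hp i).1 hij)
    · simp
    · rw [if_neg hji.ne']
      exact (mem_window_of_gt (hd i) hji).mpr ((hp i).2 hji)

lemma mem_pivotRegion_iff (hd : ∀ i, 0 < d i) :
    v ∈ pivotRegion a d j ↔ lo a d v j ∈ Set.Ioc (-1) 0 ∧ IsPivot a d j v := by
  simp only [pivotRegion, mem_biUnion, mem_pivotSlice_iff hd, mem_Ioc, Set.mem_Ioc,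
    neg_one_lt_lo_iff (hd j), lo_nonpos_iff (hd j)]
  constructor
  · rintro ⟨w, hw, rfl, hp⟩
    exact ⟨hw, hp⟩
  · rintro ⟨hw, hp⟩
    exact ⟨v j, hw, rfl, hp⟩

lemma mem_lowBox_iff (hd : ∀ i, 0 < d i) : v ∈ lowBox a d ↔ IsLow a d v := by
  simp only [lowBox, Fintype.mem_piFinset, mem_Ioc, IsLow, neg_one_lt_hi_iff (hd _),
    lo_le_neg_one_iff (hd _)]

lemma setB_eq_lowBox_union_pivotRegion (ha : ∀ i, 0 < a i) (hd : ∀ i, 0 < d i) :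
    setB n a d = ↑(lowBox a d ∪ univ.biUnion (pivotRegion a d)) := by
  ext v
  simp only [coe_union, coe_biUnion, Set.mem_union, mem_coe, mem_lowBox_iff hd, mem_univ,
    Set.iUnion_true, Set.mem_iUnion, mem_pivotRegion_iff hd]
  refine ⟨isLow_or_isPivot_of_mem_setB hd, ?_⟩
  rintro (hv | ⟨j, hj, hp⟩)
  · exact mem_setB_of_isLow hd hv
  · exact mem_setB_of_isPivot ha hd hj hp

lemma card_pivotSlice (ha : ∀ i, 0 ≤ a i) (w : ℤ) :
    (#(pivotSlice a d j w) : ℤ) = ∏ i ∈ univ.erase j, a i := by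
  rw [pivotSlice, Fintype.card_piFinset, Nat.cast_prod, ← mul_prod_erase univ _ (mem_univ j),
    if_pos rfl, card_singleton, Nat.cast_one, one_mul]
  exact prod_congr rfl fun i hi => by rw [if_neg (ne_of_mem_erase hi), card_window (ha i)]

lemma card_pivotRegion (ha : ∀ i, 0 ≤ a i) (hd : ∀ i, 0 < d i) :
    (#(pivotRegion a d j) : ℤ) = d j * ∏ i ∈ univ.erase j, a i := by
  rw [pivotRegion, card_biUnion, Nat.cast_sum, sum_congr rfl fun w _ => card_pivotSlice ha w,
    sum_const, Int.card_Ioc, nsmul_eq_mul, sub_sub_cancel, Int.toNat_of_nonneg (hd j).le]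
  intro w _ w' _ hne
  refine disjoint_left.mpr fun v hw hw' => hne ?_
  exact ((mem_pivotSlice_iff hd).mp hw).1.symm.trans ((mem_pivotSlice_iff hd).mp hw').1

lemma card_lowBox (ha : ∀ i, 0 ≤ a i) : (#(lowBox a d) : ℤ) = ∏ i, a i := by
  rw [lowBox, Fintype.card_piFinset, Nat.cast_prod]
  exact prod_congr rfl fun i _ => by simp [ha i]

lemma pairwiseDisjoint_pivotRegion (hd : ∀ i, 0 < d i) (s : Set (Fin n)) :
    s.PairwiseDisjoint (pivotRegion a d) :=
  fun _ _ _ _ hne => disjoint_left.mpr fun _ hj hk =>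
    hne (((mem_pivotRegion_iff hd).mp hj).2.unique ((mem_pivotRegion_iff hd).mp hk).2)

lemma disjoint_lowBox_biUnion_pivotRegion (hd : ∀ i, 0 < d i) (s : Finset (Fin n)) :
    Disjoint (lowBox a d) (s.biUnion (pivotRegion a d)) := by
  refine disjoint_left.mpr fun v hv hv' => ?_
  obtain ⟨j, -, hj⟩ := mem_biUnion.mp hv'
  obtain ⟨⟨hlo, -⟩, -⟩ := (mem_pivotRegion_iff hd).mp hj
  linarith [((mem_lowBox_iff hd).mp hv j).2]

end SetB

open SetB

theorem stmt0_general (n : ℕ) (a d : Fin n → ℤ)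
    (ha : ∀ i, 0 < a i) (hd : ∀ i, 0 < d i) :
    ((setB n a d).ncard : ℤ) =
      ∏ i, a i + ∑ j, d j * ∏ i ∈ Finset.univ.erase j, a i := by
  rw [setB_eq_lowBox_union_pivotRegion ha hd, Set.ncard_coe_finset,
    card_union_of_disjoint (disjoint_lowBox_biUnion_pivotRegion hd _),
    card_biUnion (pairwiseDisjoint_pivotRegion hd _), Nat.cast_add, Nat.cast_sum,
    card_lowBox fun i => (ha i).le]
  simp only [card_pivotRegion (fun i => (ha i).le) hd]

theorem stmt0 (n : ℕ) (hn : 2 ≤ n) (a d : Fin n → ℤ)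
    (ha : ∀ i, 0 < a i) (hd : ∀ i, 0 < d i) :
    ((setB n a d).ncard : ℤ) =
      ∏ i, a i + ∑ j, d j * ∏ i ∈ Finset.univ.erase j, a i :=
  stmt0_general n a d ha hd
end

section
/- Let n ≥ 1. The Lebesgue measure of Δ in ℝ^n equals (a_1·a_2···a_n + Σ_{j=1}^{n} d_j·∏_{1 ≤ i ≤ n, i ≠ j} a_i)/n!. -/
/-!
The point `0 = γ + ∑ᵢ (dᵢ / aᵢ) • aᵢeᵢ` is a positive combination of the other vertices, so `Δ`
is the simplex with vertices `γ, a₁e₁, …, aₙeₙ`. Its volume is `|det M| / n!`, where the rows of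
`M` are `aᵢeᵢ - γ`, i.e. `M = diag a + 𝟙 dᵀ`, and the matrix determinant lemma gives
`det M = (∏ a) (1 + ∑ⱼ dⱼ / aⱼ)`.
-/

open Finset MeasureTheory

/-- `Δ` is the convex hull of `0`, the points `aᵢ·eᵢ`, and `γ = (-d₁,…,-dₙ)` in `ℝ^n`. -/
def Delta (n : ℕ) (a d : Fin n → ℤ) : Set (Fin n → ℝ) :=
  convexHull ℝ (({0, fun i => -(d i : ℝ)} : Set (Fin n → ℝ)) ∪
    Set.range (fun i : Fin n => fun j => if j = i then (a i : ℝ) else 0))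

open scoped Matrix Pointwise

def cornerSimplex (n : ℕ) (r : ℝ) : Set (Fin n → ℝ) := {x | (∀ i, 0 ≤ x i) ∧ ∑ i, x i ≤ r}

lemma cornerSimplex_eq_empty {n : ℕ} {r : ℝ} (hr : r < 0) : cornerSimplex n r = ∅ :=
  Set.eq_empty_of_forall_notMem fun _ ⟨hx, hsum⟩ =>
    (hr.trans_le (sum_nonneg fun i _ => hx i)).not_ge hsum

lemma convex_cornerSimplex (n : ℕ) (r : ℝ) : Convex ℝ (cornerSimplex n r) := by
  rintro x ⟨hx, hxr⟩ y ⟨hy, hyr⟩ s t hs ht hst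
  refine ⟨fun i => ?_, ?_⟩
  · exact add_nonneg (mul_nonneg hs (hx i)) (mul_nonneg ht (hy i))
  · simp only [Pi.add_apply, Pi.smul_apply, smul_eq_mul, sum_add_distrib, ← mul_sum]
    calc s * ∑ i, x i + t * ∑ i, y i ≤ s * r + t * r := by gcongr
      _ = r := by rw [← add_mul, hst, one_mul]

lemma cornerSimplex_succ (n : ℕ) (r : ℝ) :
    cornerSimplex (n + 1) r = MeasurableEquiv.piFinSuccAbove (fun _ => ℝ) 0 ⁻¹'
      {p | 0 ≤ p.1 ∧ p.2 ∈ cornerSimplex n (r - p.1)} := by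
  ext x
  simp [cornerSimplex, Fin.forall_fin_succ, Fin.sum_univ_succ, Fin.tail, le_sub_iff_add_le',
    and_assoc]

lemma setLIntegral_Icc_sub_pow_div_factorial (n : ℕ) {r : ℝ} (hr : 0 ≤ r) :
    ∫⁻ t in Set.Icc 0 r, ENNReal.ofReal ((r - t) ^ n / n.factorial) =
      ENNReal.ofReal (r ^ (n + 1) / (n + 1).factorial) := by
  rw [← ofReal_integral_eq_lintegral_ofReal, integral_Icc_eq_integral_Ioc,
    ← intervalIntegral.integral_of_le hr, intervalIntegral.integral_div,
    intervalIntegral.integral_comp_sub_left (fun t => t ^ n) r]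
  · simp [Nat.factorial_succ]
    field_simp
  · exact (((continuous_const.sub continuous_id).pow n).div_const _).integrableOn_Icc
  · filter_upwards [ae_restrict_mem measurableSet_Icc] with t ht
    have : 0 ≤ r - t := sub_nonneg.2 ht.2
    positivity

lemma volume_cornerSimplex (n : ℕ) {r : ℝ} (hr : 0 ≤ r) :
    volume (cornerSimplex n r) = ENNReal.ofReal (r ^ n / n.factorial) := by
  induction n generalizing r with
  | zero => simp [cornerSimplex, hr, volume_pi]
  | succ n ih =>
    have hslab : MeasurableSet
        {p : ℝ × (Fin n → ℝ) | 0 ≤ p.1 ∧ p.2 ∈ cornerSimplex n (r - p.1)} := by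
      simp only [cornerSimplex]
      measurability
    have hslice (t : ℝ) : volume {y | 0 ≤ t ∧ y ∈ cornerSimplex n (r - t)} =
        (Set.Icc 0 r).indicator (fun t => ENNReal.ofReal ((r - t) ^ n / n.factorial)) t := by
      by_cases ht : 0 ≤ t ∧ t ≤ r
      · simp [ht.1, ih (sub_nonneg.2 ht.2), Set.indicator_of_mem (Set.mem_Icc.2 ht)]
      · rw [Set.indicator_of_notMem (by simpa using ht)]
        by_cases ht0 : 0 ≤ t
        · have hrt : r - t < 0 := sub_neg.2 (not_le.1 fun h => ht ⟨ht0, h⟩)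
          simp [ht0, cornerSimplex_eq_empty hrt]
        · simp [ht0]
    rw [cornerSimplex_succ, (volume_preserving_piFinSuccAbove _ 0).measure_preimage
      hslab.nullMeasurableSet, Measure.volume_eq_prod, Measure.prod_apply hslab]
    simp only [Set.preimage_ofPred_eq, hslice]
    rw [lintegral_indicator measurableSet_Icc, setLIntegral_Icc_sub_pow_div_factorial n hr]

lemma convexHull_insert_zero_range_single (n : ℕ) :
    convexHull ℝ (insert 0 (Set.range fun i : Fin n => Pi.single i (1 : ℝ))) =
      cornerSimplex n 1 := by
  apply subset_antisymm
  · refine convexHull_min ?_ (convex_cornerSimplex n 1)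
    rintro _ (rfl | ⟨i, rfl⟩)
    · simp [cornerSimplex]
    · refine ⟨fun j => ?_, by simp⟩
      by_cases h : j = i <;> simp [h]
  · rintro x ⟨hx, hsum⟩
    have hmem := (convex_convexHull ℝ
        (insert 0 (Set.range fun i : Fin n => Pi.single i (1 : ℝ)))).sum_mem (t := univ)
      (w := fun o : Option (Fin n) => o.elim (1 - ∑ i, x i) x)
      (z := fun o : Option (Fin n) => o.elim 0 (Pi.single · 1))
      (by rintro (_ | i) - <;> simp [hsum, hx]) (by simp [Fintype.sum_option])
      (by rintro (_ | i) - <;> exact subset_convexHull ℝ _ (by simp))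
    convert hmem
    ext j
    simp [Fintype.sum_option, Finset.sum_apply, Pi.single_apply]

lemma convexHull_insert_zero_range {n : ℕ} (v : Fin n → Fin n → ℝ) :
    convexHull ℝ (insert 0 (Set.range v)) =
      Matrix.toLin' (Matrix.of v)ᵀ '' cornerSimplex n 1 := by
  rw [← convexHull_insert_zero_range_single, LinearMap.image_convexHull, Set.image_insert_eq,
    ← Set.range_comp]
  simp [Function.comp_def]

lemma volume_convexHull_insert_zero_range {n : ℕ} (v : Fin n → Fin n → ℝ) :
    volume (convexHull ℝ (insert 0 (Set.range v))) =
      ENNReal.ofReal (|(Matrix.of v).det| / n.factorial) := by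
  rw [convexHull_insert_zero_range, Measure.addHaar_image_linearMap, LinearMap.det_toLin',
    Matrix.det_transpose, volume_cornerSimplex n zero_le_one, one_pow,
    ← ENNReal.ofReal_mul (abs_nonneg _), mul_one_div]

lemma volume_convexHull_insert_range {n : ℕ} (p : Fin n → ℝ) (v : Fin n → Fin n → ℝ) :
    volume (convexHull ℝ (insert p (Set.range v))) =
      ENNReal.ofReal (|(Matrix.of fun i => v i - p).det| / n.factorial) := by
  have htranslate : insert p (Set.range v) = p +ᵥ insert 0 (Set.range fun i => v i - p) := by
    simp [Set.vadd_set_insert, Set.vadd_set_range]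
  rw [htranslate, convexHull_vadd, measure_vadd, volume_convexHull_insert_zero_range]

lemma convexHull_insert_of_mem {𝕜 E : Type*} [Semiring 𝕜] [PartialOrder 𝕜] [AddCommMonoid E]
    [Module 𝕜 E] {s : Set E} {x : E} (hx : x ∈ convexHull 𝕜 s) :
    convexHull 𝕜 (insert x s) = convexHull 𝕜 s :=
  subset_antisymm (convexHull_min (Set.insert_subset hx (subset_convexHull 𝕜 s))
    (convex_convexHull 𝕜 s)) (convexHull_mono (Set.subset_insert x s))

lemma zero_mem_convexHull_insert_neg_range_single {n : ℕ} (a d : Fin n → ℝ)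
    (ha : ∀ i, 0 < a i) (hd : ∀ i, 0 ≤ d i) :
    (0 : Fin n → ℝ) ∈ convexHull ℝ (insert (-d) (Set.range fun i => Pi.single i (a i))) := by
  set w : Option (Fin n) → ℝ := fun o => o.elim 1 fun i => d i / a i
  set z : Option (Fin n) → Fin n → ℝ := fun o => o.elim (-d) fun i => Pi.single i (a i)
  have hbalance : ∑ o, w o • z o = 0 := by
    ext j
    simp [w, z, Fintype.sum_option, Finset.sum_apply, Pi.single_apply, (ha j).ne']
  have hmem := univ.centerMass_mem_convexHull (w := w) (z := z)
    (s := insert (-d) (Set.range fun i => Pi.single i (a i)))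
    (by rintro (_ | i) - <;> simp [w, div_nonneg (hd _) (ha _).le])
    (by simpa [w, Fintype.sum_option] using
      add_pos_of_pos_of_nonneg one_pos (sum_nonneg fun i _ => div_nonneg (hd i) (ha i).le))
    (by rintro (_ | i) - <;> simp [z])
  rwa [centerMass, hbalance, smul_zero] at hmem

lemma det_diagonal_add_replicateRow {m K : Type*} [Fintype m] [DecidableEq m] [Field K]
    (a d : m → K) (ha : ∀ i, a i ≠ 0) :
    (Matrix.diagonal a + Matrix.replicateRow m d).det =
      ∏ i, a i + ∑ j, d j * ∏ i ∈ univ.erase j, a i := by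
  have hfactor : Matrix.diagonal a + Matrix.replicateRow m d =
      Matrix.diagonal a * (1 + Matrix.replicateCol Unit a⁻¹ * Matrix.replicateRow Unit d) := by
    ext i j
    rw [← Matrix.vecMulVec_eq]
    by_cases hij : i = j
    · subst hij
      simp [Matrix.vecMulVec_apply, mul_add, ha i]
    · simp [Matrix.vecMulVec_apply, hij, ha i]
  rw [hfactor, Matrix.det_mul, Matrix.det_diagonal,
    Matrix.det_one_add_replicateCol_mul_replicateRow, mul_add, mul_one, dotProduct, mul_sum]
  congr 1
  refine sum_congr rfl fun j _ => ?_
  rw [← mul_prod_erase univ a (mem_univ j), Pi.inv_apply]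
  field_simp [ha j]

theorem stmt1_general (n : ℕ) (a d : Fin n → ℤ)
    (ha : ∀ i, 0 < a i) (hd : ∀ i, 0 < d i) :
    volume (Delta n a d) =
      ENNReal.ofReal
        ((∏ i, (a i : ℝ) + ∑ j, (d j : ℝ) * ∏ i ∈ Finset.univ.erase j, (a i : ℝ)) /
          (Nat.factorial n)) := by
  set aR : Fin n → ℝ := fun i => a i
  set dR : Fin n → ℝ := fun i => d i
  have haR (i : Fin n) : 0 < aR i := Int.cast_pos.2 (ha i)
  have hdR (i : Fin n) : 0 < dR i := Int.cast_pos.2 (hd i)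
  set v : Fin n → Fin n → ℝ := fun i => Pi.single i (aR i)
  have hv : (fun i : Fin n => fun j => if j = i then (a i : ℝ) else 0) = v := by
    ext i j
    simp [v, aR, Pi.single_apply]
  have hΔ : Delta n a d = convexHull ℝ (insert (-dR) (Set.range v)) := by
    rw [Delta, hv, Set.insert_union, Set.singleton_union]
    exact convexHull_insert_of_mem
      (zero_mem_convexHull_insert_neg_range_single aR dR haR fun i => (hdR i).le)
  have hM : Matrix.of (fun i => v i - -dR) =
      Matrix.diagonal aR + Matrix.replicateRow (Fin n) dR := by
    ext i j
    simp [v, Matrix.diagonal_apply, Pi.single_apply, eq_comm]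
  have hpos : 0 ≤ ∏ i, aR i + ∑ j, dR j * ∏ i ∈ univ.erase j, aR i :=
    add_nonneg (prod_nonneg fun i _ => (haR i).le)
      (sum_nonneg fun j _ => mul_nonneg (hdR j).le (prod_nonneg fun i _ => (haR i).le))
  rw [hΔ, volume_convexHull_insert_range, hM,
    det_diagonal_add_replicateRow aR dR fun i => (haR i).ne', abs_of_nonneg hpos]

theorem stmt1 (n : ℕ) (hn : 1 ≤ n) (a d : Fin n → ℤ)
    (ha : ∀ i, 0 < a i) (hd : ∀ i, 0 < d i) :
    volume (Delta n a d) =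
      ENNReal.ofReal
        ((∏ i, (a i : ℝ) + ∑ j, (d j : ℝ) * ∏ i ∈ Finset.univ.erase j, (a i : ℝ)) /
          (Nat.factorial n)) :=
  stmt1_general n a d ha hd
end

section
/- Let n ≥ 2. Then T̄ ⊆ M, M = T ∪ T̄, and T ∩ T̄ = ∅. -/
open Finset

/-- The set `A`: lattice points `v ∈ ℤ^(m+1)` with `-dᵢ < vᵢ ≤ aᵢ` for all `i`, and for all
pairs `i < j` with `j` not the last index, `dⱼ(vᵢ - aᵢ) ≤ dᵢ vⱼ` and `dᵢ vⱼ < dⱼ vᵢ + dᵢ aⱼ`. -/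
def setA (m : ℕ) (a d : Fin (m + 1) → ℤ) : Set (Fin (m + 1) → ℤ) :=
  {v | (∀ i, -d i < v i ∧ v i ≤ a i) ∧
    ∀ i j : Fin (m + 1), i < j → j ≠ Fin.last m →
      d j * (v i - a i) ≤ d i * v j ∧ d i * v j < d j * v i + d i * a j}

/-- The set `T̄`: elements `v` of `A` for which some non-last index `i` satisfies
`dᵢ vₙ ≥ dₙ vᵢ + dᵢ aₙ`. -/
def setTbar (m : ℕ) (a d : Fin (m + 1) → ℤ) : Set (Fin (m + 1) → ℤ) :=
  {v | v ∈ setA m a d ∧ ∃ i : Fin (m + 1), i ≠ Fin.last m ∧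
    d (Fin.last m) * v i + d i * a (Fin.last m) ≤ d i * v (Fin.last m)}

/-- The set `S`: elements `v` of `A` for which some non-last index `i` satisfies
`dᵢ vₙ < dₙ (vᵢ - aᵢ)`. -/
def setS (m : ℕ) (a d : Fin (m + 1) → ℤ) : Set (Fin (m + 1) → ℤ) :=
  {v | v ∈ setA m a d ∧ ∃ i : Fin (m + 1), i ≠ Fin.last m ∧
    d i * v (Fin.last m) < d (Fin.last m) * (v i - a i)}

/-- The set `M`: elements `v` of `A` with `aₙ - dₙ < vₙ ≤ aₙ` and some non-last index `i`
with `-dᵢ < vᵢ ≤ 0`. -/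
def setM (m : ℕ) (a d : Fin (m + 1) → ℤ) : Set (Fin (m + 1) → ℤ) :=
  {v | v ∈ setA m a d ∧ (a (Fin.last m) - d (Fin.last m) < v (Fin.last m) ∧
      v (Fin.last m) ≤ a (Fin.last m)) ∧
    ∃ i : Fin (m + 1), i ≠ Fin.last m ∧ -d i < v i ∧ v i ≤ 0}

/-- The set `T`: elements `v` of `M` such that every non-last index `j` satisfies
`dⱼ vₙ < dₙ vⱼ + dⱼ aₙ`. -/
def setT (m : ℕ) (a d : Fin (m + 1) → ℤ) : Set (Fin (m + 1) → ℤ) :=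
  {v | v ∈ setM m a d ∧ ∀ j : Fin (m + 1), j ≠ Fin.last m →
    d j * v (Fin.last m) < d (Fin.last m) * v j + d j * a (Fin.last m)}

theorem stmt5 (m : ℕ) (hm : 1 ≤ m) (a d : Fin (m + 1) → ℤ)
    (ha : ∀ i, 0 < a i) (hd : ∀ i, 0 < d i) :
    setTbar m a d ⊆ setM m a d ∧
    setM m a d = setT m a d ∪ setTbar m a d ∧
    setT m a d ∩ setTbar m a d = ∅ := by
  have hsub : setTbar m a d ⊆ setM m a d := by
    rintro v ⟨hA, i, hi, hle⟩
    refine ⟨hA, ⟨?_, (hA.1 (Fin.last m)).2⟩, i, hi, (hA.1 i).1, ?_⟩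
    · have h1 := (hA.1 i).1
      have := hd i; have := hd (Fin.last m)
      nlinarith
    · have h2 := (hA.1 (Fin.last m)).2
      have := hd i; have := hd (Fin.last m)
      nlinarith
  refine ⟨hsub, ?_, ?_⟩
  · ext v
    constructor
    · intro hv
      by_cases h : ∃ i : Fin (m+1), i ≠ Fin.last m ∧
          d (Fin.last m) * v i + d i * a (Fin.last m) ≤ d i * v (Fin.last m)
      · exact Or.inr ⟨hv.1, h⟩
      · push_neg at h
        exact Or.inl ⟨hv, fun j hj => h j hj⟩
    · rintro (h | h)
      · exact h.1
      · exact hsub h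
  · ext v
    simp only [Set.mem_inter_iff, Set.mem_empty_iff_false, iff_false]
    rintro ⟨⟨_, hT⟩, _, i, hi, hle⟩
    exact absurd hle (not_le.mpr (hT i hi))
end

section
/- Let n ≥ 2 and let v ∈ T. Then the set I_v := {i ∈ {1,…,n−1} : −d_i < v_i ≤ 0} is nonempty; let i_0 be the smallest element of I_v satisfying v_{i_0}/d_{i_0} = min{v_i/d_i : i ∈ I_v}. Then ψ(v) := v + a_{i_0}·e_{i_0} − a_n·e_n belongs to S. (That is, ψ(T) ⊆ S.) -/
open Finset

/-- `psiIdx m a d v i₀` says that `i₀` is the smallest element of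
`I_v = {i ≠ n : -dᵢ < vᵢ ≤ 0}` achieving the minimum of `vᵢ / dᵢ` over `I_v`
(the inequality `v_{i₀}/d_{i₀} ≤ vᵢ/dᵢ` is written as `dᵢ · v_{i₀} ≤ d_{i₀} · vᵢ`). -/
def psiIdx (m : ℕ) (d : Fin (m + 1) → ℤ) (v : Fin (m + 1) → ℤ) (i₀ : Fin (m + 1)) : Prop :=
  (i₀ ≠ Fin.last m ∧ -d i₀ < v i₀ ∧ v i₀ ≤ 0) ∧
  (∀ i : Fin (m + 1), i ≠ Fin.last m → -d i < v i → v i ≤ 0 → d i * v i₀ ≤ d i₀ * v i) ∧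
  (∀ i : Fin (m + 1), i ≠ Fin.last m → -d i < v i → v i ≤ 0 → d i * v i₀ = d i₀ * v i → i₀ ≤ i)

/-- The map `ψ` sending `v` to `v + a_{i₀}·e_{i₀} - aₙ·eₙ`. -/
def psiMap (m : ℕ) (a : Fin (m + 1) → ℤ) (i₀ : Fin (m + 1)) (v : Fin (m + 1) → ℤ) :
    Fin (m + 1) → ℤ :=
  fun j => v j + (if j = i₀ then a i₀ else 0) - (if j = Fin.last m then a (Fin.last m) else 0)

theorem stmt6 (m : ℕ) (hm : 1 ≤ m) (a d : Fin (m + 1) → ℤ)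
    (ha : ∀ i, 0 < a i) (hd : ∀ i, 0 < d i)
    (v : Fin (m + 1) → ℤ) (hv : v ∈ setT m a d) :
    (∃ i : Fin (m + 1), i ≠ Fin.last m ∧ -d i < v i ∧ v i ≤ 0) ∧
    ∀ i₀ : Fin (m + 1), psiIdx m d v i₀ → psiMap m a i₀ v ∈ setS m a d := by
  obtain ⟨⟨⟨hbound, hpair⟩, hlastb, hex⟩, hT⟩ := hv
  refine ⟨hex, ?_⟩
  rintro i₀ ⟨⟨hi₀ne, hi₀lt, hi₀le⟩, hmin, htie⟩
  refine ⟨⟨?_, ?_⟩, i₀, hi₀ne, ?_⟩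
  · intro i
    simp only [psiMap]
    by_cases h1 : i = i₀
    · subst h1
      rw [if_pos rfl, if_neg hi₀ne]
      constructor
      · have := ha i; linarith
      · linarith
    · by_cases h2 : i = Fin.last m
      · subst h2
        rw [if_neg h1, if_pos rfl]
        constructor
        · linarith [hlastb.1]
        · have := ha (Fin.last m); linarith [hlastb.2]
      · rw [if_neg h1, if_neg h2]
        have := hbound i
        constructor <;> linarith [this.1, this.2]
  · intro i j hij hjne
    have hine : i ≠ Fin.last m := by
      intro h
      exact absurd (lt_of_lt_of_le hij (Fin.le_last j)) (h ▸ lt_irrefl _)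
    simp only [psiMap, if_neg hjne, if_neg hine, sub_zero]
    by_cases h1 : i = i₀
    · subst h1
      have hj : j ≠ i := fun h => absurd hij (h ▸ lt_irrefl _)
      rw [if_pos rfl, if_neg hj]
      have key : d j * v i ≤ d i * v j := by
        by_cases hvj : v j ≤ 0
        · exact hmin j hjne (hbound j).1 hvj
        · nlinarith [hd j, hd i]
      have h2 := (hpair i j hij hjne).2
      constructor
      · nlinarith
      · nlinarith [hd j, ha i]
    · by_cases h2 : j = i₀
      · subst h2
        rw [if_neg h1, if_pos rfl]
        have key : d i * v j < d j * v i := by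
          by_cases hvi : v i ≤ 0
          · have hle := hmin i hine (hbound i).1 hvi
            rcases lt_or_eq_of_le hle with h | h
            · exact h
            · exact absurd (htie i hine (hbound i).1 hvi h) (not_le.mpr hij)
          · nlinarith [hd i, hd j]
        have h3 := (hpair i j hij hjne).1
        constructor
        · nlinarith [hd i, ha j]
        · nlinarith
      · rw [if_neg h1, if_neg h2]
        simpa using hpair i j hij hjne
  · have e1 : psiMap m a i₀ v i₀ = v i₀ + a i₀ := by simp [psiMap, hi₀ne]
    have e2 : psiMap m a i₀ v (Fin.last m) = v (Fin.last m) - a (Fin.last m) := by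
      simp [psiMap, Ne.symm hi₀ne]
    rw [e1, e2]
    have := hT i₀ hi₀ne
    nlinarith
end

section
/- Let n ≥ 2 and let u ∈ S. Then the set J_u := {j ∈ {1,…,n−1} : d_j·u_n < d_n·(u_j − a_j)} is nonempty; let j_0 be the largest element of J_u satisfying (u_{j_0} − a_{j_0})/d_{j_0} = max{(u_j − a_j)/d_j : j ∈ J_u}. Then φ(u) := u − a_{j_0}·e_{j_0} + a_n·e_n belongs to T. (That is, φ(S) ⊆ T.) -/
open Finset

/-- `phiIdx m a d u j₀` says that `j₀` is the largest element of
`J_u = {j ≠ n : dⱼ uₙ < dₙ (uⱼ - aⱼ)}` achieving the maximum of `(uⱼ - aⱼ)/dⱼ` over `J_u`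
(the inequality `(u_{j₀} - a_{j₀})/d_{j₀} ≥ (uⱼ - aⱼ)/dⱼ` is written as
`dⱼ · (u_{j₀} - a_{j₀}) ≥ d_{j₀} · (uⱼ - aⱼ)`). -/
def phiIdx (m : ℕ) (a d : Fin (m + 1) → ℤ) (u : Fin (m + 1) → ℤ) (j₀ : Fin (m + 1)) : Prop :=
  (j₀ ≠ Fin.last m ∧ d j₀ * u (Fin.last m) < d (Fin.last m) * (u j₀ - a j₀)) ∧
  (∀ j : Fin (m + 1), j ≠ Fin.last m → d j * u (Fin.last m) < d (Fin.last m) * (u j - a j) →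
    d j₀ * (u j - a j) ≤ d j * (u j₀ - a j₀)) ∧
  (∀ j : Fin (m + 1), j ≠ Fin.last m → d j * u (Fin.last m) < d (Fin.last m) * (u j - a j) →
    d j * (u j₀ - a j₀) = d j₀ * (u j - a j) → j ≤ j₀)

/-- The map `φ` sending `u` to `u - a_{j₀}·e_{j₀} + aₙ·eₙ`. -/
def phiMap (m : ℕ) (a : Fin (m + 1) → ℤ) (j₀ : Fin (m + 1)) (u : Fin (m + 1) → ℤ) :
    Fin (m + 1) → ℤ :=
  fun j => u j - (if j = j₀ then a j₀ else 0) + (if j = Fin.last m then a (Fin.last m) else 0)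

theorem stmt7 (m : ℕ) (hm : 1 ≤ m) (a d : Fin (m + 1) → ℤ)
    (ha : ∀ i, 0 < a i) (hd : ∀ i, 0 < d i)
    (u : Fin (m + 1) → ℤ) (hu : u ∈ setS m a d) :
    (∃ j : Fin (m + 1), j ≠ Fin.last m ∧
      d j * u (Fin.last m) < d (Fin.last m) * (u j - a j)) ∧
    ∀ j₀ : Fin (m + 1), phiIdx m a d u j₀ → phiMap m a j₀ u ∈ setT m a d := by
  
  obtain ⟨hA, hex⟩ := hu
  refine ⟨hex, ?_⟩
  intro j₀ hidx
  obtain ⟨⟨hj₀n, hj₀lt⟩, hmax, hlargest⟩ := hidx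
  have hbd := hA.1
  have hpair := hA.2
  have hdn : (0:ℤ) < d (Fin.last m) := hd (Fin.last m)
  have hdj₀ : (0:ℤ) < d j₀ := hd j₀
  -- u at last index is negative
  have hun0 : u (Fin.last m) < 0 := by
    have h0 : d (Fin.last m) * (u j₀ - a j₀) ≤ 0 :=
      mul_nonpos_of_nonneg_of_nonpos hdn.le (sub_nonpos.mpr (hbd j₀).2)
    by_contra h
    push_neg at h
    have := mul_nonneg hdj₀.le h
    linarith
  -- lower bound on u j₀ - a j₀
  have hlow : -d j₀ < u j₀ - a j₀ := by
    have h1 : d j₀ * (-d (Fin.last m)) < d j₀ * u (Fin.last m) :=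
      mul_lt_mul_of_pos_left (hbd (Fin.last m)).1 hdj₀
    have h2 : d (Fin.last m) * (-d j₀) < d (Fin.last m) * (u j₀ - a j₀) := by nlinarith
    exact lt_of_mul_lt_mul_left h2 hdn.le
  -- maximality lemma (weak)
  have L1 : ∀ j, j ≠ Fin.last m → d j₀ * (u j - a j) ≤ d j * (u j₀ - a j₀) := by
    intro j hjn
    by_cases hJ : d j * u (Fin.last m) < d (Fin.last m) * (u j - a j)
    · exact hmax j hjn hJ
    · push_neg at hJ
      have h1 : d j₀ * (d (Fin.last m) * (u j - a j)) ≤ d j₀ * (d j * u (Fin.last m)) :=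
        mul_le_mul_of_nonneg_left hJ hdj₀.le
      have h2 : d j * (d j₀ * u (Fin.last m)) < d j * (d (Fin.last m) * (u j₀ - a j₀)) :=
        mul_lt_mul_of_pos_left hj₀lt (hd j)
      have h3 : d (Fin.last m) * (d j₀ * (u j - a j)) <
          d (Fin.last m) * (d j * (u j₀ - a j₀)) := by nlinarith
      exact (lt_of_mul_lt_mul_left h3 hdn.le).le
  -- maximality lemma (strict, for larger indices)
  have L1s : ∀ j, j ≠ Fin.last m → j₀ < j →
      d j₀ * (u j - a j) < d j * (u j₀ - a j₀) := by
    intro j hjn hlt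
    by_cases hJ : d j * u (Fin.last m) < d (Fin.last m) * (u j - a j)
    · refine (hmax j hjn hJ).lt_of_ne (fun heq => ?_)
      exact absurd (hlargest j hjn hJ heq.symm) (not_le.mpr hlt)
    · push_neg at hJ
      have h1 : d j₀ * (d (Fin.last m) * (u j - a j)) ≤ d j₀ * (d j * u (Fin.last m)) :=
        mul_le_mul_of_nonneg_left hJ hdj₀.le
      have h2 : d j * (d j₀ * u (Fin.last m)) < d j * (d (Fin.last m) * (u j₀ - a j₀)) :=
        mul_lt_mul_of_pos_left hj₀lt (hd j)
      have h3 : d (Fin.last m) * (d j₀ * (u j - a j)) <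
          d (Fin.last m) * (d j * (u j₀ - a j₀)) := by nlinarith
      exact lt_of_mul_lt_mul_left h3 hdn.le
  -- comparison lemma
  have L2 : ∀ j, j ≠ Fin.last m → j ≠ j₀ →
      d j * (u j₀ - a j₀) ≤ d j₀ * u j := by
    intro j hjn hjj₀
    rcases lt_trichotomy j j₀ with hlt | heq | hlt
    · have := (hpair j j₀ hlt hj₀n).2
      nlinarith
    · exact absurd heq hjj₀
    · exact (hpair j₀ j hlt hjn).1
  -- values of v := phiMap
  have hvj₀ : phiMap m a j₀ u j₀ = u j₀ - a j₀ := by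
    simp [phiMap, hj₀n]
  have hvn : phiMap m a j₀ u (Fin.last m) = u (Fin.last m) + a (Fin.last m) := by
    simp [phiMap, Ne.symm hj₀n]
  have hvo : ∀ j, j ≠ j₀ → j ≠ Fin.last m → phiMap m a j₀ u j = u j := by
    intro j h1 h2
    simp [phiMap, h1, h2]
  -- membership in setA
  have hAv : phiMap m a j₀ u ∈ setA m a d := by
    constructor
    · intro i
      by_cases hi1 : i = j₀
      · subst hi1
        rw [hvj₀]
        constructor
        · exact hlow
        · have := ha i
          have := (hbd i).2
          linarith
      · by_cases hi2 : i = Fin.last m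
        · subst hi2
          rw [hvn]
          constructor
          · have := (hbd (Fin.last m)).1
            have := ha (Fin.last m)
            linarith
          · linarith
        · rw [hvo i hi1 hi2]
          exact hbd i
    · intro i j hij hjn
      have hin : i ≠ Fin.last m := by
        intro h
        subst h
        exact absurd hij (not_lt.mpr (Fin.le_last j))
      have hij' : i ≠ j := ne_of_lt hij
      by_cases hi1 : i = j₀
      · subst hi1
        have hjj₀ : j ≠ i := Ne.symm (ne_of_lt hij)
        rw [hvj₀, hvo j hjj₀ hjn]
        constructor
        · have := (hpair i j hij hjn).1
          have := mul_pos (hd j) (ha i)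
          nlinarith
        · have := L1s j hjn hij
          nlinarith
      · by_cases hj1 : j = j₀
        · subst hj1
          rw [hvj₀, hvo i hi1 hin]
          constructor
          · exact L1 i hin
          · have := (hpair i j hij hj₀n).2
            have := mul_pos (hd i) (ha j)
            nlinarith
        · rw [hvo i hi1 hin, hvo j hj1 hjn]
          exact hpair i j hij hjn
  refine ⟨⟨hAv, ?_, ⟨j₀, hj₀n, ?_⟩⟩, ?_⟩
  · rw [hvn]
    constructor
    · have := (hbd (Fin.last m)).1
      linarith
    · linarith
  · rw [hvj₀]
    exact ⟨hlow, by linarith [(hbd j₀).2]⟩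
  · intro j hjn
    by_cases hj1 : j = j₀
    · subst hj1
      rw [hvj₀, hvn]
      nlinarith
    · rw [hvo j hj1 hjn, hvn]
      have h1 : d j * (d j₀ * u (Fin.last m)) < d j * (d (Fin.last m) * (u j₀ - a j₀)) :=
        mul_lt_mul_of_pos_left hj₀lt (hd j)
      have h2 : d (Fin.last m) * (d j * (u j₀ - a j₀)) ≤ d (Fin.last m) * (d j₀ * u j) :=
        mul_le_mul_of_nonneg_left (L2 j hjn hj1) hdn.le
      have h3 : d j₀ * (d j * u (Fin.last m)) < d j₀ * (d (Fin.last m) * u j) := by nlinarith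
      have h4 : d j * u (Fin.last m) < d (Fin.last m) * u j :=
        lt_of_mul_lt_mul_left h3 hdj₀.le
      nlinarith
end

section
/- Let n ≥ 2. With ψ : T → S and φ : S → T defined as above, the two maps are mutually inverse: φ(ψ(v)) = v for every v ∈ T, and ψ(φ(u)) = u for every u ∈ S. -/
open Finset

theorem stmt8 (m : ℕ) (hm : 1 ≤ m) (a d : Fin (m + 1) → ℤ)
    (ha : ∀ i, 0 < a i) (hd : ∀ i, 0 < d i) :
    (∀ v ∈ setT m a d, ∀ i₀ : Fin (m + 1), psiIdx m d v i₀ →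
      ∀ j₀ : Fin (m + 1), phiIdx m a d (psiMap m a i₀ v) j₀ →
        phiMap m a j₀ (psiMap m a i₀ v) = v) ∧
    (∀ u ∈ setS m a d, ∀ j₀ : Fin (m + 1), phiIdx m a d u j₀ →
      ∀ i₀ : Fin (m + 1), psiIdx m d (phiMap m a j₀ u) i₀ →
        psiMap m a i₀ (phiMap m a j₀ u) = u) := by
  constructor
  · rintro v ⟨⟨⟨hbnd, hpair⟩, hM2, hM3⟩, hT⟩ i₀ ⟨⟨hi₀n, hi₀l, hi₀u⟩, hmin, htie⟩
      j₀ ⟨⟨hj₀n, hj₀J⟩, hmax, htie'⟩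
    set w := psiMap m a i₀ v with hw
    have hlast : (Fin.last m) ≠ i₀ := fun h => hi₀n h.symm
    have hwl : w (Fin.last m) = v (Fin.last m) - a (Fin.last m) := by
      simp [hw, psiMap, hlast]
    have hwi : w i₀ = v i₀ + a i₀ := by simp [hw, psiMap, hi₀n]
    have hwj : ∀ j, j ≠ i₀ → j ≠ Fin.last m → w j = v j := by
      intro j h1 h2; simp [hw, psiMap, h1, h2]
    -- i₀ ∈ J_w
    have hi₀J : d i₀ * w (Fin.last m) < d (Fin.last m) * (w i₀ - a i₀) := by
      have := hT i₀ hi₀n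
      rw [hwl, hwi]; ring_nf; linarith
    have hji : j₀ = i₀ := by
      rcases lt_trichotomy i₀ j₀ with hlt | heq | hlt
      · exfalso
        have hne : j₀ ≠ i₀ := ne_of_gt hlt
        have hA := (hpair i₀ j₀ hlt hj₀n).2
        have h1 := hmax i₀ hi₀n hi₀J
        rw [hwi, hwj j₀ hne hj₀n] at h1
        linarith
      · exact heq.symm
      · exfalso
        have hne : j₀ ≠ i₀ := ne_of_lt hlt
        have hA := (hpair j₀ i₀ hlt hi₀n).1
        have h1 := hmax i₀ hi₀n hi₀J
        rw [hwi, hwj j₀ hne hj₀n] at h1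
        have heq2 : d i₀ * (w j₀ - a j₀) = d j₀ * (w i₀ - a i₀) := by
          rw [hwi, hwj j₀ hne hj₀n]; ring_nf; ring_nf at hA h1; linarith
        have := htie' i₀ hi₀n hi₀J heq2
        exact absurd this (not_le.mpr hlt)
    subst hji
    funext j
    simp only [hw, phiMap, psiMap]
    ring
  · rintro u ⟨⟨hbnd, hpair⟩, -⟩ j₀ ⟨⟨hj₀n, hj₀J⟩, hmax, htie'⟩
      i₀ ⟨⟨hi₀n, hi₀l, hi₀u⟩, hmin, htie⟩
    set w := phiMap m a j₀ u with hw
    have hlast : (Fin.last m) ≠ j₀ := fun h => hj₀n h.symm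
    have hwl : w (Fin.last m) = u (Fin.last m) + a (Fin.last m) := by
      simp [hw, phiMap, hlast]
    have hwj : w j₀ = u j₀ - a j₀ := by simp [hw, phiMap, hj₀n]
    have hwo : ∀ j, j ≠ j₀ → j ≠ Fin.last m → w j = u j := by
      intro j h1 h2; simp [hw, phiMap, h1, h2]
    -- j₀ ∈ I_w
    have hj₀I : -d j₀ < w j₀ ∧ w j₀ ≤ 0 := by
      constructor
      · rw [hwj]
        have h1 := (hbnd (Fin.last m)).1
        have h2 := hd j₀
        have h3 := hd (Fin.last m)
        nlinarith
      · rw [hwj]; linarith [(hbnd j₀).2]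
    have hij : i₀ = j₀ := by
      rcases lt_trichotomy i₀ j₀ with hlt | heq | hlt
      · exfalso
        have hne : i₀ ≠ j₀ := ne_of_lt hlt
        have hA := (hpair i₀ j₀ hlt hj₀n).2
        have h1 := hmin j₀ hj₀n hj₀I.1 hj₀I.2
        rw [hwj, hwo i₀ hne hi₀n] at h1
        linarith
      · exact heq
      · exfalso
        have hne : i₀ ≠ j₀ := ne_of_gt hlt
        have hA := (hpair j₀ i₀ hlt hi₀n).1
        have h1 := hmin j₀ hj₀n hj₀I.1 hj₀I.2
        have heq2 : d j₀ * w i₀ = d i₀ * w j₀ := by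
          rw [hwj, hwo i₀ hne hi₀n] at h1 ⊢
          ring_nf; ring_nf at hA h1; linarith
        have := htie j₀ hj₀n hj₀I.1 hj₀I.2 heq2
        exact absurd this (not_le.mpr hlt)
    subst hij
    funext j
    simp only [hw, phiMap, psiMap]
    ring
end

section
/- Let n ≥ 3. Then |M| = d_n · Σ_{j=1}^{n−1} d_j · ∏_{1 ≤ i ≤ n−1, i ≠ j} a_i. -/
open Finset

/-!
Encode `v ∈ A` by the rational intervals `((vᵢ - aᵢ)/dᵢ, vᵢ/dᵢ]`, `i < n`: the pair conditions of
`A` say exactly that these intervals pairwise overlap (ties broken by index). Such a family has a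
unique *pivot* `j`, the first index minimising `vᵢ/dᵢ`, and overlapping is equivalent to every
interval containing `vⱼ/dⱼ` (again with ties broken by index). So `M` splits according to the
pivot; once `vⱼ ∈ (-dⱼ, 0]` is fixed, every other `vᵢ` ranges over `aᵢ` consecutive integers and
`vₙ` over `dₙ` values, which gives `dₙ dⱼ ∏_{i ≠ j} aᵢ` points with pivot `j`.
-/

section Pivot

variable {ι α : Type*} [LinearOrder ι] [LinearOrder α]

def PairwiseOverlap (r s : ι → α) : Prop :=
  ∀ ⦃i k⦄, i < k → s i ≤ r k ∧ s k < r i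

def IsPivot (r s : ι → α) (j : ι) : Prop :=
  ∀ i, (i < j → r j < r i ∧ s i ≤ r j) ∧ (j < i → r j ≤ r i ∧ s i < r j)

variable {r s : ι → α} {j : ι}

lemma IsPivot.le (h : IsPivot r s j) (i : ι) : r j ≤ r i := by
  rcases lt_trichotomy i j with hij | rfl | hij
  · exact ((h i).1 hij).1.le
  · exact le_rfl
  · exact ((h i).2 hij).1

lemma IsPivot.lower_le (h : IsPivot r s j) (hsr : ∀ i, s i < r i) (i : ι) : s i ≤ r j := by
  rcases lt_trichotomy i j with hij | rfl | hij
  · exact ((h i).1 hij).2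
  · exact (hsr i).le
  · exact ((h i).2 hij).2.le

lemma IsPivot.eq {k : ι} (hj : IsPivot r s j) (hk : IsPivot r s k) : j = k := by
  by_contra hne
  rcases lt_or_gt_of_ne hne with h | h
  · exact ((hk j).1 h).1.not_ge (hj.le k)
  · exact ((hj k).1 h).1.not_ge (hk.le j)

lemma IsPivot.pairwiseOverlap (h : IsPivot r s j) (hsr : ∀ i, s i < r i) :
    PairwiseOverlap r s := by
  intro i k hik
  refine ⟨(h.lower_le hsr i).trans (h.le k), ?_⟩
  rcases lt_trichotomy k j with hkj | rfl | hkj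
  · exact ((h k).1 hkj).2.trans_lt ((h i).1 (hik.trans hkj)).1
  · exact (hsr k).trans_le (h.le i)
  · exact ((h k).2 hkj).2.trans_le (h.le i)

lemma PairwiseOverlap.exists_isPivot [Fintype ι] [Nonempty ι] (h : PairwiseOverlap r s) :
    ∃ j, IsPivot r s j := by
  obtain ⟨j, -, hj⟩ := exists_min_image univ (fun i => toLex (r i, i)) univ_nonempty
  have hlex : ∀ i, r j < r i ∨ r j = r i ∧ j ≤ i := fun i => Prod.Lex.le_iff.mp (hj i (mem_univ i))
  refine ⟨j, fun i => ⟨fun hij => ⟨?_, (h hij).1⟩, fun hji => ⟨?_, (h hji).2⟩⟩⟩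
  · exact (hlex i).resolve_right fun h' => hij.not_ge h'.2
  · exact (hlex i).elim le_of_lt fun h' => h'.1.le

end Pivot

lemma mem_Ioc_floor_iff {α : Type*} [Ring α] [LinearOrder α] [FloorRing α] (x : α) (n z : ℤ) :
    z ∈ Ioc ⌊x⌋ (⌊x⌋ + n) ↔ x < z ∧ (z : α) - n ≤ x := by
  rw [mem_Ioc, Int.floor_lt, ← sub_le_iff_le_add, Int.le_floor, Int.cast_sub]

lemma mem_Ico_ceil_iff {α : Type*} [Ring α] [LinearOrder α] [FloorRing α] (x : α) (n z : ℤ) :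
    z ∈ Ico ⌈x⌉ (⌈x⌉ + n) ↔ x ≤ z ∧ (z : α) - n < x := by
  rw [mem_Ico, Int.ceil_le, ← sub_lt_iff_lt_add, Int.lt_ceil, Int.cast_sub]

section Count

variable {m : ℕ} (a d : Fin (m + 1) → ℤ)

def upperEnd (v : Fin (m + 1) → ℤ) (i : Fin m) : ℚ :=
  v i.castSucc / d i.castSucc

def lowerEnd (v : Fin (m + 1) → ℤ) (i : Fin m) : ℚ :=
  (v i.castSucc - a i.castSucc) / d i.castSucc

-- The coordinate ranges of the points with pivot `j` and `vⱼ = t`.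
noncomputable def window (j : Fin m) (t : ℤ) : Fin (m + 1) → Finset ℤ :=
  Fin.lastCases (Ioc (a (Fin.last m) - d (Fin.last m)) (a (Fin.last m))) fun i =>
    if i < j then Ioc ⌊(d i.castSucc * (t / d j.castSucc) : ℚ)⌋
      (⌊(d i.castSucc * (t / d j.castSucc) : ℚ)⌋ + a i.castSucc)
    else if i = j then {t}
    else Ico ⌈(d i.castSucc * (t / d j.castSucc) : ℚ)⌉
      (⌈(d i.castSucc * (t / d j.castSucc) : ℚ)⌉ + a i.castSucc)

noncomputable def pivotFiber (j : Fin m) : Finset (Fin (m + 1) → ℤ) :=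
  (Ioc (-d j.castSucc) 0).biUnion fun t => Fintype.piFinset (window a d j t)

variable {a d}

lemma apply_eq_of_mem_piFinset_window {j : Fin m} {t : ℤ} {v : Fin (m + 1) → ℤ}
    (hv : v ∈ Fintype.piFinset (window a d j t)) : v j.castSucc = t := by
  simpa [window] using Fintype.mem_piFinset.mp hv j.castSucc

lemma card_window_castSucc (ha : ∀ i, 0 ≤ a i) (j i : Fin m) (t : ℤ) :
    (#(window a d j t i.castSucc) : ℤ) = if i = j then 1 else a i.castSucc := by
  rw [window, Fin.lastCases_castSucc]
  rcases lt_trichotomy i j with hij | rfl | hij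
  · rw [if_pos hij, if_neg hij.ne, Int.card_Ioc, add_sub_cancel_left, Int.toNat_of_nonneg (ha _)]
  · simp
  · rw [if_neg hij.not_gt, if_neg hij.ne', if_neg hij.ne', Int.card_Ico, add_sub_cancel_left,
      Int.toNat_of_nonneg (ha _)]

lemma card_window_last (hd : ∀ i, 0 ≤ d i) (j : Fin m) (t : ℤ) :
    (#(window a d j t (Fin.last m)) : ℤ) = d (Fin.last m) := by
  rw [window, Fin.lastCases_last, Int.card_Ioc, sub_sub_cancel, Int.toNat_of_nonneg (hd _)]

lemma card_piFinset_window (ha : ∀ i, 0 ≤ a i) (hd : ∀ i, 0 ≤ d i) (j : Fin m) (t : ℤ) :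
    (#(Fintype.piFinset (window a d j t)) : ℤ) =
      d (Fin.last m) * ∏ i ∈ univ.erase j, a i.castSucc := by
  rw [Fintype.card_piFinset, Nat.cast_prod, Fin.prod_univ_castSucc, card_window_last hd,
    ← mul_prod_erase univ _ (mem_univ j)]
  simp only [card_window_castSucc ha, ↓reduceIte, one_mul]
  rw [prod_congr rfl fun i hi => if_neg (ne_of_mem_erase hi), mul_comm]

lemma card_pivotFiber (ha : ∀ i, 0 ≤ a i) (hd : ∀ i, 0 ≤ d i) (j : Fin m) :
    (#(pivotFiber a d j) : ℤ) =
      d (Fin.last m) * (d j.castSucc * ∏ i ∈ univ.erase j, a i.castSucc) := by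
  have hdisj : (Ioc (-d j.castSucc) 0 : Set ℤ).PairwiseDisjoint
      fun t => Fintype.piFinset (window a d j t) := by
    intro t _ t' _ htt'
    exact disjoint_left.mpr fun v hv hv' =>
      htt' ((apply_eq_of_mem_piFinset_window hv).symm.trans (apply_eq_of_mem_piFinset_window hv'))
  rw [pivotFiber, card_biUnion hdisj, Nat.cast_sum,
    sum_congr rfl fun t _ => card_piFinset_window ha hd j t, sum_const, Int.card_Ioc, nsmul_eq_mul,
    sub_neg_eq_add, zero_add, Int.toNat_of_nonneg (hd _)]
  ring

variable (hd : ∀ i, 0 < d i)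
include hd

lemma lowerEnd_le_upperEnd_iff (v : Fin (m + 1) → ℤ) (i k : Fin m) :
    lowerEnd a d v i ≤ upperEnd d v k ↔
      d k.castSucc * (v i.castSucc - a i.castSucc) ≤ d i.castSucc * v k.castSucc := by
  rw [lowerEnd, upperEnd, div_le_div_iff₀ (by exact_mod_cast hd _) (by exact_mod_cast hd _),
    mul_comm, mul_comm (v _ : ℚ)]
  norm_cast

lemma lowerEnd_lt_upperEnd_iff (v : Fin (m + 1) → ℤ) (i k : Fin m) :
    lowerEnd a d v k < upperEnd d v i ↔
      d i.castSucc * v k.castSucc < d k.castSucc * v i.castSucc + d i.castSucc * a k.castSucc := by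
  rw [lowerEnd, upperEnd, div_lt_div_iff₀ (by exact_mod_cast hd _) (by exact_mod_cast hd _)]
  norm_cast
  constructor <;> intro h <;> linarith

lemma pairConditions_iff_pairwiseOverlap (v : Fin (m + 1) → ℤ) :
    (∀ i j : Fin (m + 1), i < j → j ≠ Fin.last m →
      d j * (v i - a i) ≤ d i * v j ∧ d i * v j < d j * v i + d i * a j) ↔
      PairwiseOverlap (upperEnd d v) (lowerEnd a d v) := by
  constructor
  · intro h i k hik
    rw [lowerEnd_le_upperEnd_iff hd, lowerEnd_lt_upperEnd_iff hd]
    exact h _ _ (Fin.castSucc_lt_castSucc_iff.mpr hik) (Fin.castSucc_ne_last k)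
  · intro h p q hpq hq
    induction q using Fin.lastCases with
    | last => exact absurd rfl hq
    | cast k =>
      induction p using Fin.lastCases with
      | last => exact absurd hpq (Fin.castSucc_lt_last k).not_gt
      | cast i =>
        rw [← lowerEnd_le_upperEnd_iff hd, ← lowerEnd_lt_upperEnd_iff hd]
        exact h (Fin.castSucc_lt_castSucc_iff.mp hpq)

lemma mem_window_castSucc_iff (v : Fin (m + 1) → ℤ) (j i : Fin m) :
    v i.castSucc ∈ window a d j (v j.castSucc) i.castSucc ↔
      (i < j → upperEnd d v j < upperEnd d v i ∧ lowerEnd a d v i ≤ upperEnd d v j) ∧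
      (j < i → upperEnd d v j ≤ upperEnd d v i ∧ lowerEnd a d v i < upperEnd d v j) := by
  have hdi : (0 : ℚ) < d i.castSucc := by exact_mod_cast hd _
  simp only [window, Fin.lastCases_castSucc]
  rcases lt_trichotomy i j with hij | rfl | hij
  · rw [if_pos hij, mem_Ioc_floor_iff]
    simp only [hij, hij.not_gt, upperEnd, lowerEnd, lt_div_iff₀' hdi, div_le_iff₀' hdi,
      true_implies, false_implies, and_true]
  · simp
  · rw [if_neg hij.not_gt, if_neg hij.ne', mem_Ico_ceil_iff]
    simp only [hij, hij.not_gt, upperEnd, lowerEnd, le_div_iff₀' hdi, div_lt_iff₀' hdi,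
      true_implies, false_implies, true_and]

lemma mem_pivotFiber_iff (j : Fin m) (v : Fin (m + 1) → ℤ) :
    v ∈ pivotFiber a d j ↔
      v (Fin.last m) ∈ Ioc (a (Fin.last m) - d (Fin.last m)) (a (Fin.last m)) ∧
      v j.castSucc ∈ Ioc (-d j.castSucc) 0 ∧ IsPivot (upperEnd d v) (lowerEnd a d v) j := by
  simp only [pivotFiber, mem_biUnion]
  constructor
  · rintro ⟨t, ht, hv⟩
    obtain rfl := apply_eq_of_mem_piFinset_window hv
    rw [Fintype.mem_piFinset, Fin.forall_fin_succ'] at hv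
    exact ⟨by simpa [window] using hv.2, ht,
      fun i => (mem_window_castSucc_iff hd v j i).mp (hv.1 i)⟩
  · rintro ⟨hlast, hj, hpivot⟩
    refine ⟨v j.castSucc, hj, Fintype.mem_piFinset.mpr (Fin.forall_fin_succ'.mpr
      ⟨fun i => (mem_window_castSucc_iff hd v j i).mpr (hpivot i), by simpa [window] using hlast⟩)⟩

lemma lowerEnd_lt_upperEnd (ha : ∀ i, 0 < a i) (v : Fin (m + 1) → ℤ) (i : Fin m) :
    lowerEnd a d v i < upperEnd d v i :=
  div_lt_div_of_pos_right (sub_lt_self _ (by exact_mod_cast ha _)) (by exact_mod_cast hd _)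

lemma mem_setM_iff (ha : ∀ i, 0 < a i) (v : Fin (m + 1) → ℤ) :
    v ∈ setM m a d ↔ ∃ j, v ∈ pivotFiber a d j := by
  have hdq : ∀ i, (0 : ℚ) < d i := fun i => by exact_mod_cast hd i
  simp only [mem_pivotFiber_iff hd, mem_Ioc]
  constructor
  · rintro ⟨⟨hbounds, hpairs⟩, hlast, i₀, hi₀, hvi₀⟩
    induction i₀ using Fin.lastCases with
    | last => exact absurd rfl hi₀
    | cast i₀ =>
      have : Nonempty (Fin m) := ⟨i₀⟩
      obtain ⟨j, hj⟩ := ((pairConditions_iff_pairwiseOverlap hd v).mp hpairs).exists_isPivot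
      have hUi₀ : upperEnd d v i₀ ≤ 0 := by
        rw [upperEnd, div_le_iff₀ (hdq _), zero_mul]; exact_mod_cast hvi₀.2
      have hUj := (hj.le i₀).trans hUi₀
      rw [upperEnd, div_le_iff₀ (hdq _), zero_mul] at hUj
      exact ⟨j, hlast, ⟨(hbounds _).1, by exact_mod_cast hUj⟩, hj⟩
  · rintro ⟨j, hlast, hvj, hj⟩
    have hUj : -1 < upperEnd d v j ∧ upperEnd d v j ≤ 0 := by
      rw [upperEnd, lt_div_iff₀ (hdq _), div_le_iff₀ (hdq _), neg_one_mul, zero_mul]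
      exact_mod_cast hvj
    refine ⟨⟨fun k => ?_, (pairConditions_iff_pairwiseOverlap hd v).mpr
      (hj.pairwiseOverlap (lowerEnd_lt_upperEnd hd ha v))⟩,
      hlast, j.castSucc, Fin.castSucc_ne_last j, hvj⟩
    induction k using Fin.lastCases with
    | last => exact ⟨by linarith [ha (Fin.last m)], hlast.2⟩
    | cast i =>
      have hUi : -1 < upperEnd d v i := hUj.1.trans_le (hj.le i)
      have hLi : lowerEnd a d v i ≤ 0 :=
        (hj.lower_le (lowerEnd_lt_upperEnd hd ha v) i).trans hUj.2
      rw [upperEnd, lt_div_iff₀ (hdq _), neg_one_mul] at hUi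
      rw [lowerEnd, div_le_iff₀ (hdq _), zero_mul, sub_nonpos] at hLi
      exact ⟨by exact_mod_cast hUi, by exact_mod_cast hLi⟩

end Count

theorem stmt10_general (m : ℕ) (a d : Fin (m + 1) → ℤ)
    (ha : ∀ i, 0 < a i) (hd : ∀ i, 0 < d i) :
    ((setM m a d).ncard : ℤ) =
      d (Fin.last m) *
        ∑ j : Fin m, d j.castSucc * ∏ i ∈ Finset.univ.erase j, a i.castSucc := by
  have hM : setM m a d = ↑(univ.biUnion (pivotFiber a d)) := by
    ext v
    simp [mem_setM_iff hd ha]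
  have hdisj : (↑(univ : Finset (Fin m)) : Set (Fin m)).PairwiseDisjoint (pivotFiber a d) :=
    fun j _ k _ hjk => disjoint_left.mpr fun v hvj hvk =>
      hjk (((mem_pivotFiber_iff hd j v).mp hvj).2.2.eq ((mem_pivotFiber_iff hd k v).mp hvk).2.2)
  rw [hM, Set.ncard_coe_finset, card_biUnion hdisj, Nat.cast_sum, mul_sum]
  exact sum_congr rfl fun j _ => card_pivotFiber (fun i => (ha i).le) (fun i => (hd i).le) j

theorem stmt10 (m : ℕ) (hm : 2 ≤ m) (a d : Fin (m + 1) → ℤ)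
    (ha : ∀ i, 0 < a i) (hd : ∀ i, 0 < d i) :
    ((setM m a d).ncard : ℤ) =
      d (Fin.last m) *
        ∑ j : Fin m, d j.castSucc * ∏ i ∈ Finset.univ.erase j, a i.castSucc :=
  stmt10_general m a d ha hd
end

section
/- Let n ≥ 3. Then |A| = (∏_{i=1}^{n−1} a_i + Σ_{j=1}^{n−1} d_j · ∏_{1 ≤ i ≤ n−1, i ≠ j} a_i) · (a_n + d_n). -/
open Finset

/-!
Put `x i = v i / d i` for `i < n`; the last coordinate is free and contributes the factor
`a n + d n`. If all `v i ≥ 1` the pair conditions hold automatically, giving `∏ a i` vectors.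
Otherwise let `j` be the first index at which `x` is minimal. Then `-1 < x j ≤ 0`, and the pair
conditions say exactly that `x i ∈ (x j, x j + a i / d i]` for `i < j` and
`x i ∈ [x j, x j + a i / d i)` for `i > j`. Each such window holds `a i` integers `v i`, so there
are `d j * ∏_{i ≠ j} a i` vectors for each `j`.
-/

theorem Int.mem_Ioc_ediv_iff {n D A x : ℤ} (hD : 0 < D) :
    x ∈ Ioc (n / D) (n / D + A) ↔ n < D * x ∧ D * x ≤ n + D * A := by
  rw [mem_Ioc, Int.ediv_lt_iff_lt_mul hD, ← sub_le_iff_le_add, Int.le_ediv_iff_mul_le hD]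
  constructor <;> rintro ⟨h₁, h₂⟩ <;> constructor <;> linarith

noncomputable section

namespace PairwiseWindow

variable {ι : Type*} [LinearOrder ι] (a d : ι → ℤ)

def PairCompatible (v : ι → ℤ) : Prop :=
  ∀ i j, i < j → d j * (v i - a i) ≤ d i * v j ∧ d i * v j < d j * v i + d i * a j

/-- For `j < i` the window `d i * c ≤ d j * x < d i * c + d j * a i` is rewritten as
`d i * c - 1 < d j * x ≤ d i * c - 1 + d j * a i`. -/
def slabWindow (j : ι) (c : ℤ) (i : ι) : Finset ℤ :=
  if i = j then {c}
  else if i < j then Ioc (d i * c / d j) (d i * c / d j + a i)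
  else Ioc ((d i * c - 1) / d j) ((d i * c - 1) / d j + a i)

theorem slabWindow_self (j : ι) (c : ℤ) : slabWindow a d j c j = {c} := if_pos rfl

theorem card_slabWindow {i j : ι} (c : ℤ) (hij : i ≠ j) :
    (slabWindow a d j c i).card = (a i).toNat := by
  rw [slabWindow, if_neg hij]
  split_ifs <;> simp [Int.card_Ioc]

variable [Fintype ι]

def compatSet : Finset (ι → ℤ) := by
  classical
  exact (Fintype.piFinset fun i => Ioc (-d i) (a i)).filter (PairCompatible a d)

def posBox : Finset (ι → ℤ) := Fintype.piFinset fun i => Icc 1 (a i)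

def slab (j : ι) : Finset (ι → ℤ) :=
  (Ioc (-d j) 0).biUnion fun c => Fintype.piFinset (slabWindow a d j c)

variable {a d}

theorem mem_compatSet {v : ι → ℤ} :
    v ∈ compatSet a d ↔ (∀ i, v i ∈ Ioc (-d i) (a i)) ∧ PairCompatible a d v := by
  simp only [compatSet, mem_filter, Fintype.mem_piFinset]

theorem mem_slab_iff {j : ι} (hj : 0 < d j) {v : ι → ℤ} :
    v ∈ slab a d j ↔ v j ∈ Ioc (-d j) 0 ∧ ∀ i,
      (i < j → d i * v j < d j * v i ∧ d j * v i ≤ d i * v j + d j * a i) ∧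
      (j < i → d i * v j ≤ d j * v i ∧ d j * v i < d i * v j + d j * a i) := by
  have hwin : ∀ i, i ≠ j → (v i ∈ slabWindow a d j (v j) i ↔
      (i < j → d i * v j < d j * v i ∧ d j * v i ≤ d i * v j + d j * a i) ∧
      (j < i → d i * v j ≤ d j * v i ∧ d j * v i < d i * v j + d j * a i)) := by
    intro i hij
    rcases hij.lt_or_gt with hlt | hgt
    · rw [slabWindow, if_neg hij, if_pos hlt, Int.mem_Ioc_ediv_iff hj]
      simp only [hlt, hlt.not_gt, true_imp_iff, false_imp_iff, and_true]
    · rw [slabWindow, if_neg hij, if_neg hgt.not_gt, Int.mem_Ioc_ediv_iff hj]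
      simp only [hgt, hgt.not_gt, true_imp_iff, false_imp_iff, true_and]
      omega
  simp only [slab, mem_biUnion, Fintype.mem_piFinset]
  constructor
  · rintro ⟨c, hc, hv⟩
    obtain rfl : v j = c := by simpa [slabWindow_self] using hv j
    refine ⟨hc, fun i => ?_⟩
    rcases eq_or_ne i j with rfl | hij
    · simp
    · exact (hwin i hij).1 (hv i)
  · rintro ⟨hc, hv⟩
    refine ⟨v j, hc, fun i => ?_⟩
    rcases eq_or_ne i j with rfl | hij
    · simp [slabWindow_self]
    · exact (hwin i hij).2 (hv i)

theorem card_slab (ha : ∀ i, 0 ≤ a i) {j : ι} (hj : 0 < d j) :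
    ((slab a d j).card : ℤ) = d j * ∏ i ∈ univ.erase j, a i := by
  have hdisj : (Ioc (-d j) 0 : Set ℤ).PairwiseDisjoint
      fun c => Fintype.piFinset (slabWindow a d j c) := by
    intro c _ c' _ hcc'
    refine disjoint_left.2 fun v hv hv' => hcc' ?_
    have hj := Fintype.mem_piFinset.1 hv j
    have hj' := Fintype.mem_piFinset.1 hv' j
    rw [slabWindow_self, mem_singleton] at hj hj'
    rw [← hj, hj']
  have hfiber : ∀ c, (Fintype.piFinset (slabWindow a d j c)).card =
      ∏ i ∈ univ.erase j, (a i).toNat := by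
    intro c
    rw [Fintype.card_piFinset, ← prod_erase _ (by rw [slabWindow_self, card_singleton])]
    exact prod_congr rfl fun i hi => card_slabWindow a d c (ne_of_mem_erase hi)
  rw [slab, card_biUnion hdisj, sum_congr rfl fun c _ => hfiber c, sum_const, Int.card_Ioc,
    smul_eq_mul]
  push_cast
  rw [Int.toNat_of_nonneg (by omega)]
  simp only [zero_sub, neg_neg, Int.toNat_of_nonneg (ha _)]

theorem card_posBox (ha : ∀ i, 0 ≤ a i) : ((posBox a).card : ℤ) = ∏ i, a i := by
  rw [posBox, Fintype.card_piFinset]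
  push_cast
  refine prod_congr rfl fun i _ => ?_
  rw [Int.card_Icc, add_sub_cancel_right, Int.toNat_of_nonneg (ha i)]

theorem posBox_subset_compatSet (hd : ∀ i, 0 < d i) : posBox a ⊆ compatSet a d := by
  intro v hv
  have hv' i : 1 ≤ v i ∧ v i ≤ a i := mem_Icc.1 (Fintype.mem_piFinset.1 hv i)
  refine mem_compatSet.2 ⟨fun i => mem_Ioc.2 ⟨by linarith [hd i, hv' i], (hv' i).2⟩,
    fun i j _ => ?_⟩
  obtain ⟨hi₁, hi₂⟩ := hv' i
  obtain ⟨hj₁, hj₂⟩ := hv' j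
  constructor <;> nlinarith [hd i, hd j]

theorem slab_subset_compatSet (ha : ∀ i, 0 ≤ a i) (hd : ∀ i, 0 < d i) (j : ι) :
    slab a d j ⊆ compatSet a d := by
  intro v hv
  obtain ⟨hc, hwin⟩ := (mem_slab_iff (hd j)).1 hv
  obtain ⟨hc₁, hc₂⟩ := mem_Ioc.1 hc
  have hdj := hd j
  have hweak i : d i * v j ≤ d j * v i ∧ d j * v i ≤ d i * v j + d j * a i := by
    rcases lt_trichotomy i j with h | rfl | h
    · exact ⟨((hwin i).1 h).1.le, ((hwin i).1 h).2⟩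
    · constructor <;> nlinarith [ha i]
    · exact ⟨((hwin i).2 h).1, ((hwin i).2 h).2.le⟩
  refine mem_compatSet.2 ⟨fun i => ?_, fun p q hpq => ?_⟩
  · obtain ⟨h₁, h₂⟩ := hweak i
    rw [mem_Ioc]
    constructor <;> nlinarith [hd i, ha i]
  · obtain ⟨hp₁, hp₂⟩ := hweak p
    obtain ⟨hq₁, hq₂⟩ := hweak q
    have hdp := hd p
    have hdq := hd q
    constructor
    · nlinarith
    · rcases lt_or_ge p j with hpj | hjp
      · have := ((hwin p).1 hpj).1
        nlinarith
      · have := ((hwin q).2 (hjp.trans_lt hpq)).2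
        nlinarith

theorem mem_posBox_or_exists_mem_slab (hd : ∀ i, 0 < d i) {v : ι → ℤ}
    (hv : v ∈ compatSet a d) : v ∈ posBox a ∨ ∃ j, v ∈ slab a d j := by
  obtain ⟨hbox, hpair⟩ := mem_compatSet.1 hv
  by_cases hpos : ∀ i, 1 ≤ v i
  · exact Or.inl <| Fintype.mem_piFinset.2 fun i => mem_Icc.2 ⟨hpos i, (mem_Ioc.1 (hbox i)).2⟩
  push Not at hpos
  obtain ⟨i₀, hi₀⟩ := hpos
  -- `j` is the first index at which `v i / d i` is minimal
  obtain ⟨j, -, hj⟩ := exists_min_image univ (fun i => toLex ((v i : ℚ) / d i, i))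
    ⟨i₀, mem_univ _⟩
  have hcross i : d i * v j ≤ d j * v i ∧ (i < j → d i * v j < d j * v i) := by
    have hdi : (0 : ℚ) < d i := by exact_mod_cast hd i
    have hdj : (0 : ℚ) < d j := by exact_mod_cast hd j
    have hle := Prod.Lex.le_iff.1 (hj i (mem_univ i))
    simp only [ofLex_toLex] at hle
    constructor
    · have : (v j : ℚ) / d j ≤ v i / d i := hle.elim le_of_lt fun h => h.1.le
      rw [div_le_div_iff₀ hdj hdi] at this
      exact_mod_cast (by linarith : (d i : ℚ) * v j ≤ d j * v i)
    · intro hij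
      have : (v j : ℚ) / d j < v i / d i := hle.resolve_right fun h => h.2.not_gt hij
      rw [div_lt_div_iff₀ hdj hdi] at this
      exact_mod_cast (by linarith : (d i : ℚ) * v j < d j * v i)
  refine Or.inr ⟨j, (mem_slab_iff (hd j)).2 ⟨mem_Ioc.2 ⟨(mem_Ioc.1 (hbox j)).1, ?_⟩,
    fun i => ⟨fun hij => ⟨(hcross i).2 hij, ?_⟩, fun hji => ⟨(hcross i).1, (hpair j i hji).2⟩⟩⟩⟩
  · nlinarith [(hcross i₀).1, hd i₀, hd j]
  · linarith [(hpair i j hij).1, mul_sub (d j) (v i) (a i)]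

theorem disjoint_posBox_slab (hd : ∀ i, 0 < d i) (j : ι) : Disjoint (posBox a) (slab a d j) :=
  disjoint_left.2 fun v hpos hslab => by
    have h₁ := (mem_Icc.1 (Fintype.mem_piFinset.1 hpos j)).1
    have h₂ := (mem_Ioc.1 ((mem_slab_iff (hd j)).1 hslab).1).2
    omega

theorem disjoint_slab_of_lt (hd : ∀ i, 0 < d i) {j k : ι} (hjk : j < k) :
    Disjoint (slab a d j) (slab a d k) :=
  disjoint_left.2 fun v hj hk => by
    have h₁ := (((mem_slab_iff (hd j)).1 hj).2 k).2 hjk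
    have h₂ := (((mem_slab_iff (hd k)).1 hk).2 j).1 hjk
    linarith [h₁.1, h₂.1]

theorem compatSet_eq_union (ha : ∀ i, 0 ≤ a i) (hd : ∀ i, 0 < d i) :
    compatSet a d = posBox a ∪ univ.biUnion (slab a d) := by
  refine Subset.antisymm (fun v hv => ?_) (union_subset (posBox_subset_compatSet hd)
    (biUnion_subset.2 fun j _ => slab_subset_compatSet ha hd j))
  rcases mem_posBox_or_exists_mem_slab hd hv with h | ⟨j, h⟩
  · exact mem_union_left _ h
  · exact mem_union_right _ (mem_biUnion.2 ⟨j, mem_univ j, h⟩)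

theorem card_compatSet (ha : ∀ i, 0 ≤ a i) (hd : ∀ i, 0 < d i) :
    ((compatSet a d).card : ℤ) = ∏ i, a i + ∑ j, d j * ∏ i ∈ univ.erase j, a i := by
  have hslabs : (Set.univ : Set ι).PairwiseDisjoint (slab a d) := fun j _ k _ hjk =>
    hjk.lt_or_gt.elim (disjoint_slab_of_lt hd) fun h => (disjoint_slab_of_lt hd h).symm
  have hpos : Disjoint (posBox a) (univ.biUnion (slab a d)) :=
    (disjoint_biUnion_right _ _ _).2 fun j _ => disjoint_posBox_slab hd j
  rw [compatSet_eq_union ha hd, card_union_of_disjoint hpos, card_biUnion (by simpa using hslabs),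
    Nat.cast_add, Nat.cast_sum, card_posBox ha]
  simp only [card_slab ha (hd _)]

end PairwiseWindow

end

theorem Fin.forall_lt_ne_last_iff {m : ℕ} {P : Fin (m + 1) → Fin (m + 1) → Prop} :
    (∀ i j, i < j → j ≠ Fin.last m → P i j) ↔
      ∀ i j : Fin m, i < j → P i.castSucc j.castSucc := by
  refine ⟨fun h i j hij => h _ _ (Fin.castSucc_lt_castSucc_iff.2 hij) (Fin.castSucc_ne_last j),
    fun h i j hij hj => ?_⟩
  obtain ⟨j, rfl⟩ := Fin.exists_castSucc_eq.2 hj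
  obtain ⟨i, rfl⟩ := Fin.exists_castSucc_eq.2 (hij.trans (Fin.castSucc_lt_last j)).ne
  exact h i j (Fin.castSucc_lt_castSucc_iff.1 hij)

theorem setA_eq_image (m : ℕ) (a d : Fin (m + 1) → ℤ) :
    setA m a d = Fin.snocEquiv (fun _ => ℤ) ''
      (Set.Ioc (-d (Fin.last m)) (a (Fin.last m)) ×ˢ
        ↑(PairwiseWindow.compatSet (fun i : Fin m => a i.castSucc) fun i => d i.castSucc)) := by
  ext v
  rw [Equiv.image_eq_preimage_symm]
  simp only [setA, Set.mem_ofPred_eq, Set.mem_preimage, Fin.snocEquiv_symm_apply, Set.mem_prod,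
    Set.mem_Ioc, mem_coe, PairwiseWindow.mem_compatSet, mem_Ioc, Fin.init,
    PairwiseWindow.PairCompatible]
  rw [Fin.forall_lt_ne_last_iff, Fin.forall_fin_succ']
  tauto

theorem stmt11_general (m : ℕ) (a d : Fin (m + 1) → ℤ)
    (ha : ∀ i, 0 < a i) (hd : ∀ i, 0 < d i) :
    ((setA m a d).ncard : ℤ) =
      (∏ i : Fin m, a i.castSucc +
          ∑ j : Fin m, d j.castSucc * ∏ i ∈ Finset.univ.erase j, a i.castSucc) *
        (a (Fin.last m) + d (Fin.last m)) := by
  have hlast : 0 ≤ a (Fin.last m) - -d (Fin.last m) := by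
    linarith [ha (Fin.last m), hd (Fin.last m)]
  rw [setA_eq_image, Set.ncard_image_of_injective _ (Equiv.injective _), Set.ncard_prod,
    ← Finset.coe_Ioc, Set.ncard_coe_finset, Set.ncard_coe_finset, Nat.cast_mul, Int.card_Ioc,
    Int.toNat_of_nonneg hlast, sub_neg_eq_add,
    PairwiseWindow.card_compatSet (fun i => (ha _).le) fun i => hd _, mul_comm]

theorem stmt11 (m : ℕ) (hm : 2 ≤ m) (a d : Fin (m + 1) → ℤ)
    (ha : ∀ i, 0 < a i) (hd : ∀ i, 0 < d i) :
    ((setA m a d).ncard : ℤ) =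
      (∏ i : Fin m, a i.castSucc +
          ∑ j : Fin m, d j.castSucc * ∏ i ∈ Finset.univ.erase j, a i.castSucc) *
        (a (Fin.last m) + d (Fin.last m)) :=
  stmt11_general m a d ha hd
end

section
/- Let n ≥ 1, let k ∈ {1,…,n}, and let u ∈ ℝ^n satisfy u_k ≤ 0 and d_k·u_j ≥ d_j·u_k for all j ≠ k. Then w(u) = −(u_k/d_k)·(1 + Σ_{1 ≤ i ≤ n, i ≠ k} d_i/a_i) + Σ_{1 ≤ i ≤ n, i ≠ k} u_i/a_i, where w is the weight function attached to Δ. -/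
open Finset

open Pointwise in
/-- `Δ` is the convex hull of `0`, the points `aᵢ·eᵢ`, and `γ = (-d₁,…,-dₙ)` in `ℝ^n`;
the weight `wt n a d v` is the infimum of `{c : ℝ | 0 ≤ c ∧ v ∈ c • Δ}`. -/
noncomputable def wt (n : ℕ) (a d : Fin n → ℤ) (v : Fin n → ℝ) : ℝ :=
  sInf {c : ℝ | 0 ≤ c ∧ v ∈ c • (convexHull ℝ (({0, fun i => -(d i : ℝ)} : Set (Fin n → ℝ)) ∪
    Set.range (fun i : Fin n => fun j => if j = i then (a i : ℝ) else 0)))}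

open Pointwise in
theorem stmt15 (n : ℕ) (hn : 1 ≤ n) (a d : Fin n → ℤ)
    (ha : ∀ i, 0 < a i) (hd : ∀ i, 0 < d i)
    (k : Fin n) (u : Fin n → ℝ)
    (huk : u k ≤ 0) (hcone : ∀ j, j ≠ k → (d j : ℝ) * u k ≤ (d k : ℝ) * u j) :
    wt n a d u =
      -(u k / (d k : ℝ)) * (1 + ∑ i ∈ Finset.univ.erase k, (d i : ℝ) / (a i : ℝ)) +
        ∑ i ∈ Finset.univ.erase k, u i / (a i : ℝ) := by
  have haR : ∀ i, (0:ℝ) < (a i : ℝ) := fun i => by exact_mod_cast ha i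
  have hdR : ∀ i, (0:ℝ) < (d i : ℝ) := fun i => by exact_mod_cast hd i
  set γ : Fin n → ℝ := fun i => -(d i : ℝ) with hγ
  set E : Fin n → Fin n → ℝ := fun i => fun j => if j = i then (a i : ℝ) else 0 with hE
  set V : Set (Fin n → ℝ) := ({0, γ} : Set (Fin n → ℝ)) ∪ Set.range E with hV
  set Δ : Set (Fin n → ℝ) := convexHull ℝ V with hΔ
  set t : ℝ := -(u k) / (d k : ℝ) with ht
  set s : Fin n → ℝ := fun j => (u j + t * (d j : ℝ)) / (a j : ℝ) with hs
  have htnn : 0 ≤ t := div_nonneg (neg_nonneg.2 huk) (hdR k).le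
  have htdk : t * (d k : ℝ) = -(u k) := by
    rw [ht, div_mul_cancel₀ _ (hdR k).ne']
  have hsk : s k = 0 := by
    simp only [hs, htdk]
    simp
  have hsnum : ∀ j, u j + t * (d j : ℝ) = ((d k : ℝ) * u j - (d j : ℝ) * u k) / (d k : ℝ) := by
    intro j
    rw [eq_div_iff (hdR k).ne', add_mul, mul_right_comm t, htdk]
    ring
  have hsnn : ∀ j, 0 ≤ s j := by
    intro j
    by_cases hj : j = k
    · subst hj; rw [hsk]
    · apply div_nonneg _ (haR j).le
      rw [hsnum j]
      apply div_nonneg _ (hdR k).le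
      have := hcone j hj
      linarith
  have u_eq : ∀ m, u m = -(t * (d m : ℝ)) + s m * (a m : ℝ) := by
    intro m
    rw [hs]
    rw [div_mul_cancel₀ _ (haR m).ne']
    ring
  set W : ℝ := t + ∑ j, s j with hW
  have hWnn : 0 ≤ W := add_nonneg htnn (Finset.sum_nonneg fun j _ => hsnn j)
  -- W equals the RHS of the statement
  have hSplit : ∀ (f : Fin n → ℝ), ∑ j, f j = f k + ∑ j ∈ Finset.univ.erase k, f j := by
    intro f
    rw [Finset.add_sum_erase _ f (Finset.mem_univ k)]
  have hWrhs : W =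
      -(u k / (d k : ℝ)) * (1 + ∑ i ∈ Finset.univ.erase k, (d i : ℝ) / (a i : ℝ)) +
        ∑ i ∈ Finset.univ.erase k, u i / (a i : ℝ) := by
    rw [hW, hSplit s, hsk]
    have : ∀ j ∈ Finset.univ.erase k, s j = u j / (a j : ℝ) + t * ((d j : ℝ) / (a j : ℝ)) := by
      intro j _
      rw [hs]
      field_simp
    rw [Finset.sum_congr rfl this, Finset.sum_add_distrib, ← Finset.mul_sum]
    rw [ht]
    ring
  rw [← hWrhs]
  -- the vertices lie in Δ
  have h0Δ : (0 : Fin n → ℝ) ∈ Δ := subset_convexHull ℝ V (Or.inl (Or.inl rfl))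
  have hγΔ : γ ∈ Δ := subset_convexHull ℝ V (Or.inl (Or.inr rfl))
  have hEΔ : ∀ i, E i ∈ Δ := fun i => subset_convexHull ℝ V (Or.inr ⟨i, rfl⟩)
  -- membership: u ∈ W • Δ
  have hmem : u ∈ W • Δ := by
    rcases eq_or_lt_of_le hWnn with hW0 | hWpos
    · -- W = 0, so u = 0
      have hsj0 : ∀ j, s j = 0 := by
        intro j
        have hsum : ∑ j, s j = 0 := by
          have h1 : (0:ℝ) ≤ ∑ j, s j := Finset.sum_nonneg fun j _ => hsnn j
          linarith [hW ▸ hW0.symm, htnn]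
        exact le_antisymm (by
          have := Finset.single_le_sum (fun j _ => hsnn j) (Finset.mem_univ j)
          linarith) (hsnn j)
      have ht0 : t = 0 := by
        have hsum : (0:ℝ) ≤ ∑ j, s j := Finset.sum_nonneg fun j _ => hsnn j
        have := hW ▸ hW0.symm
        linarith
      have hu0 : u = 0 := by
        funext m
        rw [Pi.zero_apply, u_eq m, hsj0 m, ht0]
        ring
      rw [← hW0, hu0]
      exact ⟨0, h0Δ, smul_zero 0⟩
    · -- W > 0
      set w : Option (Fin n) → ℝ := fun o => o.elim (t / W) (fun j => s j / W) with hw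
      set z : Option (Fin n) → (Fin n → ℝ) := fun o => o.elim γ E with hz
      have hx : (∑ o : Option (Fin n), w o • z o) ∈ Δ := by
        apply Convex.sum_mem (convex_convexHull ℝ V)
        · intro o _
          cases o with
          | none => exact div_nonneg htnn hWpos.le
          | some j => exact div_nonneg (hsnn j) hWpos.le
        · rw [Fintype.sum_option]
          simp only [hw, Option.elim]
          rw [← Finset.sum_div, ← add_div, ← hW, div_self hWpos.ne']
        · intro o _
          cases o with
          | none => exact hγΔ
          | some j => exact hEΔ j
      refine Set.mem_smul_set.2 ⟨_, hx, ?_⟩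
      funext m
      rw [Pi.smul_apply, Finset.sum_apply, smul_eq_mul]
      have hterm : ∀ o : Option (Fin n), (w o • z o) m = w o * z o m := fun o => rfl
      simp only [hterm]
      rw [Fintype.sum_option]
      simp only [hw, hz, Option.elim, hγ, hE]
      have hsum : ∑ j : Fin n, s j / W * (if m = j then (a j : ℝ) else 0) = s m / W * (a m : ℝ) := by
        rw [Finset.sum_eq_single m]
        · simp
        · intro j _ hj
          simp [Ne.symm hj]
        · simp
      rw [hsum]
      rw [u_eq m]
      field_simp
  -- linear functional for the lower bound
  set S : ℝ := ∑ j ∈ Finset.univ.erase k, (d j : ℝ) / (a j : ℝ) with hS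
  have hSnn : 0 ≤ S := Finset.sum_nonneg fun j _ => div_nonneg (hdR j).le (haR j).le
  set coef : Fin n → ℝ := fun i => if i = k then -((1 + S) / (d k : ℝ)) else 1 / (a i : ℝ)
    with hcoef
  set L : (Fin n → ℝ) → ℝ := fun v => ∑ i, coef i * v i with hL
  have hlin : IsLinearMap ℝ L := by
    constructor
    · intro x y
      simp only [hL, Pi.add_apply, mul_add]
      rw [Finset.sum_add_distrib]
    · intro c x
      simp only [hL, Pi.smul_apply, smul_eq_mul, Finset.mul_sum]
      congr 1
      funext i
      ring
  have hhalf : Δ ⊆ {y | L y ≤ 1} := by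
    apply convexHull_min _ (convex_halfSpace_le hlin 1)
    rintro y (hy | ⟨i, rfl⟩)
    · rcases hy with rfl | rfl
      · simp [hL]
      · -- L γ = 1
        have : L γ = 1 := by
          rw [hL]
          simp only
          rw [hSplit (fun i => coef i * γ i)]
          have h1 : coef k * γ k = 1 + S := by
            simp only [hcoef, hγ, if_pos rfl]
            rw [neg_mul_neg, div_mul_cancel₀ _ (hdR k).ne']
          have h2 : ∀ j ∈ Finset.univ.erase k, coef j * γ j = -((d j : ℝ) / (a j : ℝ)) := by
            intro j hj
            have hjk := Finset.ne_of_mem_erase hj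
            simp only [hcoef, hγ, if_neg hjk]
            field_simp
          rw [h1, Finset.sum_congr rfl h2, Finset.sum_neg_distrib, ← hS]
          ring
        rw [Set.mem_setOf_eq, this]
    · -- L (E i) ≤ 1
      have hLE : L (E i) = coef i * (a i : ℝ) := by
        rw [hL]
        simp only [hE]
        rw [Finset.sum_eq_single i]
        · simp
        · intro j _ hj
          simp [hj]
        · simp
      rw [Set.mem_setOf_eq, hLE]
      by_cases hik : i = k
      · subst hik
        simp only [hcoef, if_pos rfl]
        have : -((1 + S) / (d i : ℝ)) * (a i : ℝ) ≤ 0 := by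
          apply mul_nonpos_of_nonpos_of_nonneg _ (haR i).le
          simp only [neg_nonpos]
          exact div_nonneg (by linarith) (hdR i).le
        linarith
      · simp only [hcoef, if_neg hik]
        rw [one_div, inv_mul_cancel₀ (haR i).ne']
  have hLu : L u = W := by
    rw [hL, hWrhs]
    simp only
    rw [hSplit (fun i => coef i * u i)]
    have h1 : coef k * u k = -(u k / (d k : ℝ)) * (1 + S) := by
      simp only [hcoef, if_pos rfl]
      field_simp
    have h2 : ∀ j ∈ Finset.univ.erase k, coef j * u j = u j / (a j : ℝ) := by
      intro j hj
      simp only [hcoef, if_neg (Finset.ne_of_mem_erase hj)]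
      rw [one_div, inv_mul_eq_div]
    rw [h1, Finset.sum_congr rfl h2]
  -- conclude
  have hwt : wt n a d u = sInf {c : ℝ | 0 ≤ c ∧ u ∈ c • Δ} := rfl
  rw [hwt]
  apply le_antisymm
  · apply csInf_le
    · exact ⟨0, fun c hc => hc.1⟩
    · exact ⟨hWnn, hmem⟩
  · have hne : Set.Nonempty {c : ℝ | 0 ≤ c ∧ u ∈ c • Δ} := ⟨W, hWnn, hmem⟩
    apply le_csInf hne
    rintro c ⟨hc0, hcu⟩
    obtain ⟨x, hxΔ, hxu⟩ := Set.mem_smul_set.1 hcu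
    have hLx : L x ≤ 1 := hhalf hxΔ
    have hsmul : L (c • x) = c * L x := hlin.map_smul c x
    rw [← hLu, ← hxu, hsmul]
    calc c * L x ≤ c * 1 := mul_le_mul_of_nonneg_left hLx hc0
    _ = c := mul_one c
end

section
/- Let n ≥ 2 and set e* := lcm(a_1,…,a_n)·lcm(d_1,…,d_n). Then for every lattice point v ∈ ℤ^n, the number e*·w(v) is a nonnegative integer, where w is the weight function attached to Δ. -/
open Finset

open Pointwise in
lemma wt_eq (n : ℕ) (a d : Fin n → ℤ) (ha : ∀ i, (0:ℝ) < (a i : ℝ)) (hd : ∀ i, (0:ℝ) < (d i : ℝ))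
    (v : Fin n → ℝ) (t : ℝ) (ht : 0 ≤ t) (htv : ∀ j, 0 ≤ v j + t * d j)
    (β : Fin n → ℝ) (hβa : ∀ j, β j * a j ≤ 1)
    (hβd : ∑ j, β j * (-(d j : ℝ)) ≤ 1)
    (hβv : ∑ j, β j * v j = (∑ j, (v j + t * d j) / (a j : ℝ)) + t) :
    wt n a d v = (∑ j, (v j + t * d j) / (a j : ℝ)) + t := by
  unfold wt
  set S : Set (Fin n → ℝ) := ({0, fun i => -(d i : ℝ)} : Set (Fin n → ℝ)) ∪
      Set.range (fun i : Fin n => fun j => if j = i then (a i : ℝ) else 0) with hS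
  obtain ⟨w₀, hw₀⟩ : ∃ w₀ : ℝ, w₀ = (∑ j, (v j + t * d j) / (a j : ℝ)) + t := ⟨_, rfl⟩
  rw [← hw₀] at hβv ⊢
  have hterm : ∀ j, 0 ≤ (v j + t * d j) / (a j : ℝ) := fun j => div_nonneg (htv j) (ha j).le
  have hw₀0 : 0 ≤ w₀ := hw₀ ▸ add_nonneg (Finset.sum_nonneg fun j _ => hterm j) ht
  have hlin : IsLinearMap ℝ (fun x : Fin n → ℝ => ∑ j, β j * x j) := by
    constructor
    · intro x y
      simp [Pi.add_apply, mul_add, Finset.sum_add_distrib]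
    · intro c x
      simp only [Pi.smul_apply, smul_eq_mul, Finset.mul_sum]
      exact Finset.sum_congr rfl fun j _ => by ring
  have hH : convexHull ℝ S ⊆ {x : Fin n → ℝ | ∑ j, β j * x j ≤ 1} := by
    apply convexHull_min _ (convex_halfSpace_le hlin 1)
    rintro x (hx | ⟨i, rfl⟩)
    · rcases hx with rfl | rfl
      · simp
      · exact hβd
    · have : ∑ j, β j * (if j = i then (a i : ℝ) else 0) = β i * a i := by
        simp [mul_ite]
      simpa [this] using hβa i
  have hmem : w₀ ∈ {c : ℝ | 0 ≤ c ∧ v ∈ c • convexHull ℝ S} := by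
    refine ⟨hw₀0, ?_⟩
    rcases eq_or_lt_of_le hw₀0 with h0 | h0
    · -- w₀ = 0 : then t = 0 and v = 0
      have h0' : (∑ j, (v j + t * d j) / (a j : ℝ)) + t = 0 := by rw [← hw₀, ← h0]
      have hsnn : 0 ≤ ∑ j, (v j + t * d j) / (a j : ℝ) :=
        Finset.sum_nonneg fun j _ => hterm j
      have hsum0 : ∑ j, (v j + t * d j) / (a j : ℝ) = 0 ∧ t = 0 := by
        constructor <;> linarith
      have hz : ∀ j ∈ Finset.univ, (v j + t * d j) / (a j : ℝ) = 0 :=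
        (Finset.sum_eq_zero_iff_of_nonneg (fun j _ => hterm j)).1 hsum0.1
      have hv : v = 0 := by
        funext j
        have := hz j (Finset.mem_univ j)
        rw [div_eq_zero_iff] at this
        rcases this with h | h
        · rw [hsum0.2] at h; simpa using by linarith
        · exact absurd h (ne_of_gt (ha j))
      rw [hv, ← h0]
      have hne : (convexHull ℝ S).Nonempty :=
        ⟨0, subset_convexHull ℝ S (Or.inl (Set.mem_insert _ _))⟩
      rw [Set.zero_smul_set hne]
      exact rfl
    · have hw₀ne : w₀ ≠ 0 := ne_of_gt h0
      have key : w₀⁻¹ • v = ∑ o : Option (Fin n),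
          (Option.elim o (t / w₀) (fun i => (v i + t * d i) / ((a i : ℝ) * w₀))) •
          (Option.elim o (fun j => -(d j : ℝ)) (fun i j => if j = i then (a i : ℝ) else 0)) := by
        funext j
        rw [Finset.sum_apply]
        rw [Fintype.sum_option]
        simp only [Option.elim, Pi.smul_apply, smul_eq_mul, mul_ite, mul_zero]
        rw [Finset.sum_ite_eq Finset.univ j (fun i => (v i + t * d i) / ((a i : ℝ) * w₀) * a i)]
        simp only [Finset.mem_univ, if_true, Pi.smul_apply, smul_eq_mul]
        field_simp [hw₀ne, ne_of_gt (ha j)]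
        ring
      refine Set.mem_smul_set.2 ⟨w₀⁻¹ • v, ?_, smul_inv_smul₀ hw₀ne v⟩
      rw [key]
      apply (convex_convexHull ℝ S).sum_mem
      · rintro (_ | i) _
        · exact div_nonneg ht hw₀0
        · exact div_nonneg (htv i) (mul_nonneg (ha i).le hw₀0)
      · rw [Fintype.sum_option]
        simp only [Option.elim]
        have : ∀ i, (v i + t * d i) / ((a i : ℝ) * w₀) = ((v i + t * d i) / (a i : ℝ)) / w₀ :=
          fun i => by rw [div_div]
        rw [Finset.sum_congr rfl fun i _ => this i, ← Finset.sum_div]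
        field_simp
        linarith [hw₀]
      · rintro (_ | i) _
        · exact subset_convexHull ℝ S (Or.inl (Set.mem_insert_of_mem _ rfl))
        · exact subset_convexHull ℝ S (Or.inr ⟨i, rfl⟩)
  apply le_antisymm
  · exact csInf_le ⟨0, fun c hc => hc.1⟩ hmem
  · refine le_csInf ⟨w₀, hmem⟩ ?_
    rintro c ⟨hc0, hcv⟩
    obtain ⟨x, hx, hcx⟩ := Set.mem_smul_set.1 hcv
    have hx1 : ∑ j, β j * x j ≤ 1 := hH hx
    calc w₀ = ∑ j, β j * v j := hβv.symm
      _ = c * ∑ j, β j * x j := by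
          rw [← hcx, Finset.mul_sum]
          exact Finset.sum_congr rfl fun j _ => by simp [smul_eq_mul]; ring
      _ ≤ c * 1 := mul_le_mul_of_nonneg_left hx1 hc0
      _ = c := mul_one c

theorem stmt16 (n : ℕ) (hn : 2 ≤ n) (a d : Fin n → ℤ)
    (ha : ∀ i, 0 < a i) (hd : ∀ i, 0 < d i) (v : Fin n → ℤ) :
    ∃ N : ℕ, ((Finset.univ.lcm a * Finset.univ.lcm d : ℤ) : ℝ) *
      wt n a d (fun i => (v i : ℝ)) = (N : ℝ) := by
  have haR : ∀ i, (0:ℝ) < ((a i : ℤ) : ℝ) := fun i => by exact_mod_cast ha i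
  have hdR : ∀ i, (0:ℝ) < ((d i : ℤ) : ℝ) := fun i => by exact_mod_cast hd i
  set A := Finset.univ.lcm a with hAdef
  set D := Finset.univ.lcm d with hDdef
  have hAd : ∀ i, a i ∣ A := fun i => Finset.dvd_lcm (Finset.mem_univ i)
  have hDd : ∀ i, d i ∣ D := fun i => Finset.dvd_lcm (Finset.mem_univ i)
  have hAnn : 0 ≤ A := by
    have h1 := Int.abs_eq_normalize A
    rw [hAdef, Finset.normalize_lcm, ← hAdef] at h1
    rw [← h1]; exact abs_nonneg A
  have hDnn : 0 ≤ D := by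
    have h1 := Int.abs_eq_normalize D
    rw [hDdef, Finset.normalize_lcm, ← hDdef] at h1
    rw [← h1]; exact abs_nonneg D
  have haRne : ∀ i, ((a i : ℤ) : ℝ) ≠ 0 := fun i => ne_of_gt (haR i)
  have hdRne : ∀ i, ((d i : ℤ) : ℝ) ≠ 0 := fun i => ne_of_gt (hdR i)
  by_cases hvpos : ∀ i, 0 ≤ v i
  · -- all coordinates nonnegative : t = 0
    have hwt := wt_eq n a d haR hdR (fun i => (v i : ℝ)) 0 le_rfl
      (fun j => by simp; exact_mod_cast hvpos j)
      (fun j => ((a j : ℤ) : ℝ)⁻¹)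
      (fun j => le_of_eq (inv_mul_cancel₀ (haRne j)))
      (le_trans (Finset.sum_nonpos fun j _ =>
        mul_nonpos_of_nonneg_of_nonpos (inv_nonneg.2 (haR j).le) (by simp [(hdR j).le])) zero_le_one)
      (by simp [div_eq_inv_mul])
    rw [hwt]
    set z : ℤ := ∑ j, D * (A / a j) * v j with hzdef
    have hz0 : 0 ≤ z := Finset.sum_nonneg fun j _ =>
      mul_nonneg (mul_nonneg hDnn (Int.ediv_nonneg hAnn (ha j).le)) (hvpos j)
    refine ⟨z.toNat, ?_⟩
    have hzn : ((z.toNat : ℕ) : ℝ) = (z : ℝ) := by exact_mod_cast Int.toNat_of_nonneg hz0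
    rw [hzn, hzdef]
    push_cast [fun j => Int.cast_div_charZero (k := ℝ) (hAd j)]
    rw [add_zero, Finset.mul_sum]
    refine Finset.sum_congr rfl fun j _ => ?_
    field_simp
    ring
  · -- some coordinate is negative
    push_neg at hvpos
    obtain ⟨i0, hi0⟩ := hvpos
    obtain ⟨k, -, hk⟩ := Finset.exists_max_image Finset.univ
      (fun i => -((v i : ℤ) : ℝ) / ((d i : ℤ) : ℝ)) ⟨i0, Finset.mem_univ i0⟩
    have hk' : ∀ i, -((v i : ℤ) : ℝ) / d i ≤ -((v k : ℤ) : ℝ) / d k := fun i =>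
      hk i (Finset.mem_univ i)
    have hi0R : (0:ℝ) < -((v i0 : ℤ) : ℝ) / d i0 :=
      div_pos (by exact_mod_cast neg_pos.2 hi0) (hdR i0)
    have htpos : (0:ℝ) < -((v k : ℤ) : ℝ) / d k := lt_of_lt_of_le hi0R (hk' i0)
    have hvk : ((v k : ℤ) : ℝ) < 0 := by
      rcases div_pos_iff.1 htpos with ⟨h1, _⟩ | ⟨_, h2⟩
      · linarith
      · exact absurd h2 (not_lt.2 (hdR k).le)
    have hvkZ : v k < 0 := by exact_mod_cast hvk
    have hcross : ∀ i, ((v k : ℤ) : ℝ) * d i ≤ ((v i : ℤ) : ℝ) * d k := by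
      intro i
      have h1 := hk' i
      rw [div_le_div_iff₀ (hdR i) (hdR k)] at h1
      linarith
    have hcrossZ : ∀ i, v k * d i ≤ v i * d k := fun i => by exact_mod_cast hcross i
    set t : ℝ := -((v k : ℤ) : ℝ) / d k with htdef
    have ht : 0 ≤ t := htpos.le
    have htv : ∀ j, (0:ℝ) ≤ ((v j : ℤ) : ℝ) + t * d j := by
      intro j
      have he : ((v j : ℤ) : ℝ) + t * d j =
          (((v j : ℤ) : ℝ) * d k - ((v k : ℤ) : ℝ) * d j) / d k := by
        rw [htdef]; rw [eq_div_iff (hdRne k)]; field_simp [hdRne k]; ring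
      rw [he]
      exact div_nonneg (by linarith [hcross j]) (hdR k).le
    set σ : ℝ := ∑ i, ((d i : ℤ) : ℝ) / ((a i : ℤ) : ℝ) with hσdef
    have hσ0 : 0 ≤ σ := Finset.sum_nonneg fun i _ => div_nonneg (hdR i).le (haR i).le
    set β : Fin n → ℝ := fun j => ((a j : ℤ) : ℝ)⁻¹ +
      (if j = k then -((1 + σ) / ((d k : ℤ) : ℝ)) else 0) with hβdef
    have hβsum : ∀ x : Fin n → ℝ,
        ∑ j, β j * x j = (∑ j, x j / ((a j : ℤ) : ℝ)) - (1 + σ) / ((d k : ℤ) : ℝ) * x k := by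
      intro x
      simp only [hβdef, add_mul, ite_mul, zero_mul, neg_mul, Finset.sum_add_distrib,
        Finset.sum_ite_eq', Finset.mem_univ, if_true, inv_mul_eq_div]
      ring
    have hβa : ∀ j, β j * ((a j : ℤ) : ℝ) ≤ 1 := by
      intro j
      by_cases h : j = k
      · subst h
        have he : β j * ((a j : ℤ) : ℝ) = 1 - (1 + σ) * ((a j : ℤ) : ℝ) / ((d j : ℤ) : ℝ) := by
          simp only [hβdef, if_true]
          field_simp [haRne j, hdRne j]
          ring
        rw [he]
        have : 0 ≤ (1 + σ) * ((a j : ℤ) : ℝ) / ((d j : ℤ) : ℝ) :=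
          div_nonneg (mul_nonneg (by linarith) (haR j).le) (hdR j).le
        linarith
      · simp only [hβdef, h, if_false, add_zero]
        exact le_of_eq (inv_mul_cancel₀ (haRne j))
    have hβd : ∑ j, β j * (-((d j : ℤ) : ℝ)) ≤ 1 := by
      rw [hβsum (fun j => -((d j : ℤ) : ℝ))]
      have h1 : ∑ j, -((d j : ℤ) : ℝ) / ((a j : ℤ) : ℝ) = -σ := by
        rw [hσdef, ← Finset.sum_neg_distrib]
        exact Finset.sum_congr rfl fun j _ => neg_div _ _
      rw [h1]
      have h2 : (1 + σ) / ((d k : ℤ) : ℝ) * ((d k : ℤ) : ℝ) = 1 + σ :=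
        div_mul_cancel₀ _ (hdRne k)
      have h3 : (1 + σ) / ((d k : ℤ) : ℝ) * -((d k : ℤ) : ℝ) = -(1 + σ) := by
        rw [mul_neg, h2]
      rw [h3]
      linarith
    have hβv : ∑ j, β j * ((v j : ℤ) : ℝ) =
        (∑ j, (((v j : ℤ) : ℝ) + t * d j) / ((a j : ℤ) : ℝ)) + t := by
      rw [hβsum (fun j => ((v j : ℤ) : ℝ))]
      have hsplit : ∀ j, (((v j : ℤ) : ℝ) + t * d j) / ((a j : ℤ) : ℝ) =
          ((v j : ℤ) : ℝ) / ((a j : ℤ) : ℝ) + t * (((d j : ℤ) : ℝ) / ((a j : ℤ) : ℝ)) := by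
        intro j
        field_simp [haRne j]
      rw [Finset.sum_congr rfl fun j _ => hsplit j, Finset.sum_add_distrib, ← Finset.mul_sum,
        ← hσdef, htdef]
      field_simp [hdRne k]
      ring
    have hwt := wt_eq n a d haR hdR (fun i => (v i : ℝ)) t ht htv β hβa hβd hβv
    rw [hwt]
    set z : ℤ := (∑ j, (A / a j) * (D / d k) * (d k * v j - v k * d j)) + A * (D / d k) * (-(v k))
      with hzdef
    have hz0 : 0 ≤ z := by
      refine add_nonneg (Finset.sum_nonneg fun j _ => ?_) ?_
      · refine mul_nonneg (mul_nonneg (Int.ediv_nonneg hAnn (ha j).le)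
          (Int.ediv_nonneg hDnn (hd k).le)) ?_
        have := hcrossZ j
        linarith [hcrossZ j]
      · exact mul_nonneg (mul_nonneg hAnn (Int.ediv_nonneg hDnn (hd k).le))
          (by linarith [hvkZ])
    refine ⟨z.toNat, ?_⟩
    have hzn : ((z.toNat : ℕ) : ℝ) = (z : ℝ) := by exact_mod_cast Int.toNat_of_nonneg hz0
    rw [hzn, hzdef]
    push_cast [fun j => Int.cast_div_charZero (k := ℝ) (hAd j),
      Int.cast_div_charZero (k := ℝ) (hDd k)]
    rw [mul_add, Finset.mul_sum, htdef]
    congr 1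
    · refine Finset.sum_congr rfl fun j _ => ?_
      field_simp [haRne j, hdRne k]
      ring
    · field_simp [hdRne k]
end

section
/- Let n ≥ 1 and let a_1,…,a_n be pairwise coprime positive integers. Then the map u ↦ Σ_{i=1}^{n} u_i/a_i is injective on B': for u, v ∈ B', if Σ_{i=1}^{n} u_i/a_i = Σ_{i=1}^{n} v_i/a_i then u = v. -/
open Finset

/-!
Clearing denominators in `∑ (uᵢ - vᵢ) / aᵢ = 0` and using pairwise coprimality shows `aᵢ ∣ uᵢ - vᵢ`,
so each coordinate either agrees or is `{uᵢ, vᵢ} = {0, aᵢ}`. The nonzero terms `±1` of the sum then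
cancel, so if `u ≠ v` there are indices `i ≠ j` with `(uᵢ, vᵢ) = (aᵢ, 0)` and `(uⱼ, vⱼ) = (0, aⱼ)`;
whichever of `i, j` is smaller, `u` or `v` has the pattern forbidden in `B'`.
-/

/-- The set `B'` of lattice points `u ∈ ℤ^n` with `0 ≤ uᵢ ≤ aᵢ` for all `i` such that
there is no pair `i < j` with `uᵢ = 0` and `uⱼ = aⱼ`. -/
def setB' (n : ℕ) (a : Fin n → ℤ) : Set (Fin n → ℤ) :=
  {u | (∀ i, 0 ≤ u i ∧ u i ≤ a i) ∧ ¬∃ i j : Fin n, i < j ∧ u i = 0 ∧ u j = a j}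

theorem sum_mul_prod_erase_eq_zero_of_sum_div_eq_zero {ι K : Type*} [Fintype ι] [DecidableEq ι]
    [Field K] {a x : ι → K} (ha : ∀ i, a i ≠ 0) (h : ∑ i, x i / a i = 0) :
    ∑ i, x i * ∏ j ∈ univ.erase i, a j = 0 := by
  calc ∑ i, x i * ∏ j ∈ univ.erase i, a j = (∑ i, x i / a i) * ∏ j, a j := by
        rw [sum_mul]
        refine sum_congr rfl fun i _ => ?_
        rw [← mul_prod_erase univ a (mem_univ i)]
        field_simp [ha i]
    _ = 0 := by rw [h, zero_mul]

theorem dvd_of_sum_mul_prod_erase_eq_zero {ι R : Type*} [Fintype ι] [DecidableEq ι] [CommRing R]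
    {a w : ι → R} (hcop : Pairwise fun i j => IsCoprime (a i) (a j))
    (h : ∑ i, w i * ∏ j ∈ univ.erase i, a j = 0) (i : ι) : a i ∣ w i := by
  have hterm : w i * ∏ j ∈ univ.erase i, a j = -∑ k ∈ univ.erase i, w k * ∏ j ∈ univ.erase k, a j :=
    eq_neg_of_add_eq_zero_left <|
      (add_sum_erase univ (fun k => w k * ∏ j ∈ univ.erase k, a j) (mem_univ i)).trans h
  have hdvd : a i ∣ w i * ∏ j ∈ univ.erase i, a j := by
    rw [hterm]
    refine (dvd_sum fun k hk => (dvd_prod_of_mem a ?_).mul_left _).neg_right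
    exact mem_erase.2 ⟨(ne_of_mem_erase hk).symm, mem_univ i⟩
  exact (IsCoprime.prod_right fun j hj => hcop (ne_of_mem_erase hj).symm).dvd_of_dvd_mul_right hdvd

theorem Int.dvd_of_sum_div_eq_zero {ι K : Type*} [Fintype ι] [Field K] [CharZero K]
    {a w : ι → ℤ} (ha : ∀ i, a i ≠ 0) (hcop : Pairwise fun i j => IsCoprime (a i) (a j))
    (h : ∑ i, (w i : K) / a i = 0) (i : ι) : a i ∣ w i := by
  classical
  refine dvd_of_sum_mul_prod_erase_eq_zero hcop ?_ i
  exact_mod_cast sum_mul_prod_erase_eq_zero_of_sum_div_eq_zero (by exact_mod_cast ha) h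

theorem Int.eq_or_of_dvd_sub {a x y : ℤ} (ha : 0 < a) (hx : 0 ≤ x ∧ x ≤ a) (hy : 0 ≤ y ∧ y ≤ a)
    (h : a ∣ x - y) : x = y ∨ (x = a ∧ y = 0) ∨ (x = 0 ∧ y = a) := by
  obtain ⟨k, hk⟩ := h
  have hk_le : k ≤ 1 := by nlinarith
  have hk_ge : -1 ≤ k := by nlinarith
  interval_cases k <;> omega

theorem exists_pos_and_exists_neg_of_sum_eq_zero {ι M : Type*} [Fintype ι] [AddCommGroup M]
    [LinearOrder M] [IsOrderedAddMonoid M] {f : ι → M} (hf : ∑ i, f i = 0) {k : ι} (hk : f k ≠ 0) :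
    (∃ i, 0 < f i) ∧ ∃ j, f j < 0 := by
  obtain ⟨i, -, hi⟩ := exists_pos_of_sum_zero_of_exists_nonzero f hf ⟨k, mem_univ k, hk⟩
  obtain ⟨j, -, hj⟩ := exists_pos_of_sum_zero_of_exists_nonzero (-f)
    (by simp only [Pi.neg_apply, sum_neg_distrib, hf, neg_zero]) ⟨k, mem_univ k, neg_ne_zero.2 hk⟩
  exact ⟨⟨i, hi⟩, j, neg_pos.1 hj⟩

theorem not_swap_of_mem_setB' {n : ℕ} {a u v : Fin n → ℤ} (ha : ∀ i, 0 < a i)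
    (hu : u ∈ setB' n a) (hv : v ∈ setB' n a) (i j : Fin n) :
    ¬(u i = a i ∧ v i = 0 ∧ u j = 0 ∧ v j = a j) := by
  rintro ⟨hui, hvi, huj, hvj⟩
  rcases lt_trichotomy i j with hij | rfl | hji
  · exact hv.2 ⟨i, j, hij, hvi, hvj⟩
  · exact (ha i).ne' (hui.symm.trans huj)
  · exact hu.2 ⟨j, i, hji, huj, hui⟩

theorem stmt17_general (n : ℕ) (a : Fin n → ℤ) (ha : ∀ i, 0 < a i)
    (hcop : ∀ i j : Fin n, i < j → Int.gcd (a i) (a j) = 1)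
    (u v : Fin n → ℤ) (hu : u ∈ setB' n a) (hv : v ∈ setB' n a)
    (h : ∑ i, (u i : ℝ) / (a i : ℝ) = ∑ i, (v i : ℝ) / (a i : ℝ)) :
    u = v := by
  have hai (i : Fin n) : (0 : ℝ) < a i := by exact_mod_cast ha i
  set f : Fin n → ℝ := fun i => ((u i - v i : ℤ) : ℝ) / a i
  have hf : ∑ i, f i = 0 := by simp only [f, Int.cast_sub, sub_div, sum_sub_distrib, h, sub_self]
  have hpair : Pairwise fun i j => IsCoprime (a i) (a j) :=
    Pairwise.of_lt fun i j hij => Int.isCoprime_iff_gcd_eq_one.2 (hcop i j hij)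
  have hcases (i : Fin n) : u i = v i ∨ (u i = a i ∧ v i = 0) ∨ (u i = 0 ∧ v i = a i) :=
    Int.eq_or_of_dvd_sub (ha i) (hu.1 i) (hv.1 i)
      (Int.dvd_of_sum_div_eq_zero (fun i => (ha i).ne') hpair hf i)
  by_contra hne
  obtain ⟨k, hk⟩ := Function.ne_iff.1 hne
  have hfk : f k ≠ 0 := div_ne_zero (by exact_mod_cast sub_ne_zero.2 hk) (hai k).ne'
  obtain ⟨⟨i, hi⟩, j, hj⟩ := exists_pos_and_exists_neg_of_sum_eq_zero hf hfk
  have hvu : v i < u i := sub_pos.1 (Int.cast_pos.1 ((div_pos_iff_of_pos_right (hai i)).1 hi))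
  have huv : u j < v j := sub_neg.1 (Int.cast_lt_zero.1 (neg_of_div_neg_left hj (hai j).le))
  refine not_swap_of_mem_setB' ha hu hv i j ?_
  have := ha i; have := ha j
  rcases hcases i with _ | _ | _ <;> rcases hcases j with _ | _ | _ <;> omega

theorem stmt17 (n : ℕ) (hn : 1 ≤ n) (a : Fin n → ℤ) (ha : ∀ i, 0 < a i)
    (hcop : ∀ i j : Fin n, i < j → Int.gcd (a i) (a j) = 1)
    (u v : Fin n → ℤ) (hu : u ∈ setB' n a) (hv : v ∈ setB' n a)
    (h : ∑ i, (u i : ℝ) / (a i : ℝ) = ∑ i, (v i : ℝ) / (a i : ℝ)) :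
    u = v :=
  stmt17_general n a ha hcop u v hu hv h
end

section
/- Let n ≥ 1 and let a_1,…,a_n be pairwise coprime positive integers. Then {Σ_{i=1}^{n} u_i/a_i : u ∈ B'} = {Σ_{i=1}^{n} u_i/a_i : u ∈ ℤ^n, 0 ≤ u_i ≤ a_i for all i}; that is, for every u ∈ ℤ^n with 0 ≤ u_i ≤ a_i for all i there exists v ∈ B' with Σ_{i=1}^{n} v_i/a_i = Σ_{i=1}^{n} u_i/a_i. -/
open Finset

/-!
Since `0 / aᵢ + aⱼ / aⱼ = aᵢ / aᵢ + 0 / aⱼ`, replacing a forbidden pair `uᵢ = 0`, `uⱼ = aⱼ`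
(`i < j`) by `uᵢ = aᵢ`, `uⱼ = 0` keeps `u` in the box and does not change `∑ uᵢ / aᵢ`.
Each such move lowers the sum of the indices `k` with `uₖ = aₖ` by `j - i > 0`, so repeating it
ends at a point of `B'`.
-/

lemma Fintype.sum_add_add_eq_of_forall_ne {ι M : Type*} [Fintype ι] [DecidableEq ι]
    [AddCommMonoid M] {f g : ι → M} {i j : ι} (hij : i ≠ j)
    (h : ∀ k, k ≠ i → k ≠ j → f k = g k) :
    ∑ k, f k + (g i + g j) = ∑ k, g k + (f i + f j) := by
  have hcompl : ∑ k ∈ {i, j}ᶜ, f k = ∑ k ∈ {i, j}ᶜ, g k :=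
    Finset.sum_congr rfl fun k hk => by
      simp only [mem_compl, mem_insert, mem_singleton, not_or] at hk
      exact h k hk.1 hk.2
  rw [← sum_add_sum_compl {i, j} f, ← sum_add_sum_compl {i, j} g, sum_pair hij, sum_pair hij,
    hcompl]
  abel

section Swap

variable {ι : Type*} [DecidableEq ι] (a u : ι → ℤ) {i j : ι}

def swapZeroFull (i j : ι) : ι → ℤ :=
  Function.update (Function.update u i (a i)) j 0

variable {a u}

lemma swapZeroFull_apply_left (hij : i ≠ j) : swapZeroFull a u i j i = a i := by
  simp [swapZeroFull, hij]

lemma swapZeroFull_apply_right : swapZeroFull a u i j j = 0 := by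
  simp [swapZeroFull]

lemma swapZeroFull_apply_of_ne {k : ι} (hki : k ≠ i) (hkj : k ≠ j) :
    swapZeroFull a u i j k = u k := by
  simp [swapZeroFull, hki, hkj]

lemma swapZeroFull_mem_box (ha : ∀ k, 0 ≤ a k) (hu : ∀ k, 0 ≤ u k ∧ u k ≤ a k) (k : ι) :
    0 ≤ swapZeroFull a u i j k ∧ swapZeroFull a u i j k ≤ a k := by
  by_cases hkj : k = j
  · subst hkj
    simpa [swapZeroFull_apply_right] using ha k
  by_cases hki : k = i
  · subst hki
    simpa [swapZeroFull_apply_left hkj] using ha k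
  · rw [swapZeroFull_apply_of_ne hki hkj]
    exact hu k

lemma sum_div_swapZeroFull [Fintype ι] {K : Type*} [Field K] [CharZero K] (hij : i ≠ j)
    (hai : a i ≠ 0) (haj : a j ≠ 0) (hui : u i = 0) (huj : u j = a j) :
    ∑ k, (swapZeroFull a u i j k : K) / a k = ∑ k, (u k : K) / a k := by
  have hswap := Fintype.sum_add_add_eq_of_forall_ne
    (f := fun k => (swapZeroFull a u i j k : K) / a k) (g := fun k => (u k : K) / a k) hij
    fun k hki hkj => by
      rw [swapZeroFull_apply_of_ne hki hkj]
  have hai' : (a i : K) ≠ 0 := by exact_mod_cast hai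
  have haj' : (a j : K) ≠ 0 := by exact_mod_cast haj
  simp only [swapZeroFull_apply_left hij, swapZeroFull_apply_right, hui, huj, Int.cast_zero,
    zero_div, div_self hai', div_self haj', zero_add, add_zero] at hswap
  exact add_right_cancel hswap

end Swap

def fullIndexSum {n : ℕ} (a u : Fin n → ℤ) : ℕ :=
  ∑ k, if u k = a k then (k : ℕ) else 0

lemma fullIndexSum_swapZeroFull_lt {n : ℕ} {a u : Fin n → ℤ} {i j : Fin n} (hij : i < j)
    (hai : a i ≠ 0) (haj : a j ≠ 0) (hui : u i = 0) (huj : u j = a j) :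
    fullIndexSum a (swapZeroFull a u i j) < fullIndexSum a u := by
  have hswap := Fintype.sum_add_add_eq_of_forall_ne
    (f := fun k => if swapZeroFull a u i j k = a k then (k : ℕ) else 0)
    (g := fun k => if u k = a k then (k : ℕ) else 0) hij.ne fun k hki hkj => by
      rw [swapZeroFull_apply_of_ne hki hkj]
  simp only [swapZeroFull_apply_left hij.ne, swapZeroFull_apply_right, hui, huj, if_true,
    if_neg hai.symm, if_neg haj.symm] at hswap
  have : (i : ℕ) < j := hij
  unfold fullIndexSum
  omega

theorem exists_mem_setB'_sum_div_eq {n : ℕ} {a : Fin n → ℤ} (ha : ∀ i, 0 < a i)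
    {K : Type*} [Field K] [CharZero K] (u : Fin n → ℤ) (hu : ∀ i, 0 ≤ u i ∧ u i ≤ a i) :
    ∃ v ∈ setB' n a, ∑ i, (v i : K) / a i = ∑ i, (u i : K) / a i := by
  induction hw : fullIndexSum a u using Nat.strong_induction_on generalizing u with
  | _ w ih =>
  by_cases hbad : ∃ i j : Fin n, i < j ∧ u i = 0 ∧ u j = a j
  · obtain ⟨i, j, hij, hui, huj⟩ := hbad
    obtain ⟨v, hv, hsum⟩ := ih _
      (hw ▸ fullIndexSum_swapZeroFull_lt hij (ha i).ne' (ha j).ne' hui huj)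
      (swapZeroFull a u i j) (swapZeroFull_mem_box (fun k => (ha k).le) hu) rfl
    exact ⟨v, hv, hsum.trans (sum_div_swapZeroFull hij.ne (ha i).ne' (ha j).ne' hui huj)⟩
  · exact ⟨u, ⟨hu, hbad⟩, rfl⟩

theorem stmt18_general (n : ℕ) (a : Fin n → ℤ) (ha : ∀ i, 0 < a i) :
    (fun u : Fin n → ℤ => ∑ i, (u i : ℝ) / (a i : ℝ)) '' setB' n a =
      (fun u : Fin n → ℤ => ∑ i, (u i : ℝ) / (a i : ℝ)) ''
        {u | ∀ i, 0 ≤ u i ∧ u i ≤ a i} := by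
  refine (Set.image_mono fun u hu => hu.1).antisymm ?_
  rintro _ ⟨u, hu, rfl⟩
  exact exists_mem_setB'_sum_div_eq ha u hu

theorem stmt18 (n : ℕ) (hn : 1 ≤ n) (a : Fin n → ℤ) (ha : ∀ i, 0 < a i)
    (hcop : ∀ i j : Fin n, i < j → Int.gcd (a i) (a j) = 1) :
    (fun u : Fin n → ℤ => ∑ i, (u i : ℝ) / (a i : ℝ)) '' setB' n a =
      (fun u : Fin n → ℤ => ∑ i, (u i : ℝ) / (a i : ℝ)) ''
        {u | ∀ i, 0 ≤ u i ∧ u i ≤ a i} :=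
  stmt18_general n a ha
end
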